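/- arXiv:1901.03300 — 6 statements merged into one kernel-verified Lean document; each statement's English description precedes it below -/
import Mathlib

section
/- Let N be a positive multiple of 8 and let F be the set of functions f : {1,…,N} → {0,1} with exactly N/2 values equal to 1, equipped with the Hamming distance. Then any ball of radius N/4 in F has cardinality at most 2^N · exp(−πN/64). -/
/-!
Give each `g : ι → Bool` the weight `3 ^ (number of coordinates where g agrees with f)`. The total
weight is `4 ^ N`, and every `g` within distance `N / 4` of `f` weighs at least `3 ^ (3N/4)`, so
the Hamming ball of radius `N / 4` in the whole cube has at most `(4 ^ 8 / 3 ^ 6) ^ (N / 8)` points.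
Finally `4 ^ 8 / 3 ^ 6 ≈ 89.9` while
`2 ^ 8 * exp (-π / 8) ≥ 256 * (1 - π / 8) > 150`.
-/

open Finset

section HammingBall

variable {ι : Type*} [Fintype ι]

lemma prod_ite_eq_pow_hammingDist {R : Type*} [CommMonoid R] (f g : ι → Bool) (x y : R) :
    ∏ i, (if f i = g i then y else x) =
      x ^ hammingDist f g * y ^ (Fintype.card ι - hammingDist f g) := by
  have hcard := card_filter_add_card_filter_not (s := univ) (fun i => f i = g i)
  rw [card_univ] at hcard
  rw [prod_ite, prod_const, prod_const, mul_comm]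
  simp only [hammingDist, ne_eq]
  congr 2
  omega

lemma sum_pow_hammingDist_mul_pow [DecidableEq ι] {R : Type*} [CommSemiring R] (f : ι → Bool)
    (x y : R) :
    ∑ g : ι → Bool, x ^ hammingDist f g * y ^ (Fintype.card ι - hammingDist f g) =
      (x + y) ^ Fintype.card ι := by
  have hfactor : ∀ i, ∑ b : Bool, (if f i = b then y else x) = x + y := by
    intro i
    cases f i <;> simp [add_comm]
  simp_rw [← prod_ite_eq_pow_hammingDist]
  rw [← Fintype.prod_sum (fun i b => if f i = b then y else x), Fintype.prod_congr _ _ hfactor,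
    prod_const, card_univ]

lemma card_hammingBall_mul_pow_le [DecidableEq ι] (f : ι → Bool) (r : ℕ) {y : ℕ} (hy : 0 < y) :
    #{g | hammingDist f g ≤ r} * y ^ (Fintype.card ι - r) ≤ (1 + y) ^ Fintype.card ι := by
  calc #{g | hammingDist f g ≤ r} * y ^ (Fintype.card ι - r)
      ≤ ∑ g ∈ {g | hammingDist f g ≤ r},
          1 ^ hammingDist f g * y ^ (Fintype.card ι - hammingDist f g) := by
        rw [← smul_eq_mul]
        refine card_nsmul_le_sum _ _ _ fun g hg => ?_
        rw [one_pow, one_mul]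
        have hgr : hammingDist f g ≤ r := (mem_filter.mp hg).2
        exact Nat.pow_le_pow_right hy (by omega)
    _ ≤ ∑ g, 1 ^ hammingDist f g * y ^ (Fintype.card ι - hammingDist f g) :=
        sum_le_sum_of_subset (subset_univ _)
    _ = (1 + y) ^ Fintype.card ι := sum_pow_hammingDist_mul_pow f 1 y

end HammingBall

lemma four_pow_eight_div_three_pow_six_le :
    (4 : ℝ) ^ 8 / 3 ^ 6 ≤ 2 ^ 8 * Real.exp (-Real.pi / 8) := by
  have hpi : Real.pi < 3.15 := Real.pi_lt_d2
  have hexp : 1 - Real.pi / 8 ≤ Real.exp (-Real.pi / 8) := by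
    linarith [Real.add_one_le_exp (-Real.pi / 8)]
  rw [div_le_iff₀ (by norm_num)]
  nlinarith

theorem stmt3_general (N : ℕ) (h8 : 8 ∣ N) (f : Fin N → Bool) :
    (Nat.card {g : Fin N → Bool //
        Nat.card {i : Fin N // g i = true} = N / 2 ∧ hammingDist f g ≤ N / 4} : ℝ)
      ≤ 2 ^ N * Real.exp (-(Real.pi * N) / 64) := by
  classical
  obtain ⟨m, rfl⟩ := h8
  have hsub : Nat.card {g : Fin (8 * m) → Bool //
      Nat.card {i : Fin (8 * m) // g i = true} = 8 * m / 2 ∧ hammingDist f g ≤ 8 * m / 4}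
        ≤ #{g | hammingDist f g ≤ 2 * m} := by
    rw [Nat.card_eq_fintype_card, Fintype.card_subtype]
    refine card_le_card fun g hg => ?_
    simp only [mem_filter, mem_univ, true_and] at hg ⊢
    omega
  have hball := card_hammingBall_mul_pow_le f (2 * m) (y := 3) (by norm_num)
  rw [Fintype.card_fin, show 8 * m - 2 * m = 6 * m by omega] at hball
  calc _ ≤ (#{g | hammingDist f g ≤ 2 * m} : ℝ) := by exact_mod_cast hsub
    _ ≤ ((4 : ℝ) ^ 8 / 3 ^ 6) ^ m := by
      rw [div_pow, ← pow_mul, ← pow_mul, le_div_iff₀ (by positivity)]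
      exact_mod_cast hball
    _ ≤ (2 ^ 8 * Real.exp (-Real.pi / 8)) ^ m := by gcongr; exact four_pow_eight_div_three_pow_six_le
    _ = 2 ^ (8 * m) * Real.exp (-(Real.pi * (8 * m : ℕ)) / 64) := by
      rw [mul_pow, ← pow_mul, ← Real.exp_nat_mul]
      push_cast
      ring_nf

theorem stmt3 (N : ℕ) (hN : 0 < N) (h8 : 8 ∣ N) (f : Fin N → Bool)
    (hf : Nat.card {i : Fin N // f i = true} = N / 2) :
    (Nat.card {g : Fin N → Bool //
        Nat.card {i : Fin N // g i = true} = N / 2 ∧ hammingDist f g ≤ N / 4} : ℝ)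
      ≤ 2 ^ N * Real.exp (-(Real.pi * N) / 64) :=
  stmt3_general N h8 f
end

section
/- Let N be a positive multiple of 8 and let F be the set of functions f : {1,…,N} → {0,1} with exactly N/2 values equal to 1, equipped with the Hamming distance. Then there exists a subset F' ⊆ F that is N/4-separated (any two distinct elements have Hamming distance greater than N/4) and has cardinality at least (2N)^{−1/2} exp(πN/64). -/
open Finset

lemma stmt4_ball_bound (n m : ℕ) (g : Fin n → Bool) :
    ((Finset.univ.filter fun f : Fin n → Bool => hammingDist f g ≤ m)).card * 3 ^ (n - m)
      ≤ 4 ^ n := by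
  have key : ∑ f : Fin n → Bool, ∏ i, (if f i = g i then 3 else 1) = 4 ^ n := by
    have e1 := Finset.prod_univ_sum (fun _ : Fin n => (Finset.univ : Finset Bool))
      (fun i b => if b = g i then (3:ℕ) else 1)
    rw [Fintype.piFinset_univ] at e1
    calc ∑ f : Fin n → Bool, ∏ i, (if f i = g i then (3:ℕ) else 1)
        = ∏ i : Fin n, ∑ b : Bool, (if b = g i then 3 else 1) := e1.symm
      _ = 4 ^ n := by
          have h4 : ∀ i : Fin n, ∑ b : Bool, (if b = g i then (3:ℕ) else 1) = 4 := by
            intro i; cases hgi : g i <;> simp [Fintype.sum_bool, hgi]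
          rw [Finset.prod_congr rfl fun i _ => h4 i, Finset.prod_const, Finset.card_univ,
            Fintype.card_fin]
  have hterm : ∀ f : Fin n → Bool, hammingDist f g ≤ m →
      3 ^ (n - m) ≤ ∏ i, (if f i = g i then (3:ℕ) else 1) := by
    intro f hf
    have hprod : ∏ i, (if f i = g i then (3:ℕ) else 1)
        = 3 ^ (Finset.univ.filter fun i => f i = g i).card := by
      rw [Finset.prod_ite, Finset.prod_const, Finset.prod_const, one_pow, mul_one]
    have hsplit : (Finset.univ.filter fun i => f i = g i).card + hammingDist f g = n := by
      classical
      have h := @Finset.card_filter_add_card_filter_not _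
        (Finset.univ : Finset (Fin n)) (fun i => f i = g i) _ _
      simpa [hammingDist, Finset.card_univ] using h
    rw [hprod]
    have hle : n - m ≤ (Finset.univ.filter fun i => f i = g i).card := by
      have h1 : n - m ≤ n - hammingDist f g := Nat.sub_le_sub_left hf n
      have h2 : n - hammingDist f g = (Finset.univ.filter fun i => f i = g i).card :=
        Nat.sub_eq_of_eq_add hsplit.symm
      exact h2 ▸ h1
    exact Nat.pow_le_pow_right (by norm_num) hle
  calc ((Finset.univ.filter fun f : Fin n → Bool => hammingDist f g ≤ m)).card * 3 ^ (n - m)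
      = ∑ f ∈ (Finset.univ.filter fun f : Fin n → Bool => hammingDist f g ≤ m),
          3 ^ (n-m) := by rw [Finset.sum_const, smul_eq_mul]
    _ ≤ ∑ f ∈ (Finset.univ.filter fun f : Fin n → Bool => hammingDist f g ≤ m),
          ∏ i, (if f i = g i then 3 else 1) := by
        apply Finset.sum_le_sum; intro f hf
        exact hterm f (Finset.mem_filter.mp hf).2
    _ ≤ ∑ f : Fin n → Bool, ∏ i, (if f i = g i then 3 else 1) :=
        Finset.sum_le_sum_of_subset (Finset.filter_subset _ _)
    _ = 4 ^ n := key

lemma stmt4_log_three_gt : (1.09 : ℝ) < Real.log 3 := by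
  rw [Real.lt_log_iff_exp_lt (by norm_num : (0:ℝ) < 3)]
  have h1 : Real.exp 1.09 = Real.exp 1 * Real.exp 0.09 := by
    rw [← Real.exp_add]; norm_num
  have h5 : (0:ℝ) < Real.exp 0.09 := Real.exp_pos _
  have h2 : Real.exp 0.09 * 0.91 ≤ 1 := by
    have h3 := Real.add_one_le_exp (-0.09)
    rw [Real.exp_neg] at h3
    have h7 : (0.91:ℝ) ≤ (Real.exp 0.09)⁻¹ := by linarith
    have h8 := mul_le_mul_of_nonneg_right h7 h5.le
    rw [inv_mul_cancel₀ (ne_of_gt h5)] at h8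
    linarith
  have h6 := Real.exp_one_lt_d9
  rw [h1]
  nlinarith [Real.exp_pos 1]

lemma stmt4_final_ineq (M c : ℕ) (hM : 1 ≤ M) (hc1 : 1 ≤ c)
    (hc : 2 ^ (8 * M) * 3 ^ (6 * M) ≤ 8 * M * (c * 4 ^ (8 * M))) :
    (2 * ((8 * M : ℕ) : ℝ)) ^ (-(1 / 2 : ℝ)) * Real.exp (Real.pi * ((8 * M : ℕ) : ℝ) / 64)
      ≤ (c : ℝ) := by
  have hm1' : (1 : ℝ) ≤ (M : ℝ) := by exact_mod_cast hM
  have hm2' : 2 ≤ M → (2 : ℝ) ≤ (M : ℝ) := fun h => by exact_mod_cast h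
  have hcR' : ((2 : ℝ)) ^ (8 * M) * 3 ^ (6 * M) ≤ 8 * (M : ℝ) * ((c : ℝ) * 4 ^ (8 * M)) := by
    exact_mod_cast hc
  set m : ℝ := (M : ℝ) with hm
  have hm1 : (1 : ℝ) ≤ m := hm1'
  have hm0 : (0 : ℝ) ≤ m := by linarith
  have hc1R : (1 : ℝ) ≤ (c : ℝ) := by exact_mod_cast hc1
  have h2N : (2 * ((8 * M : ℕ) : ℝ)) = 16 * m := by push_cast; ring
  have hsq : (16 * m : ℝ) ^ (-(1 / 2 : ℝ)) = (4 * Real.sqrt m)⁻¹ := by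
    rw [Real.rpow_neg (by positivity), ← Real.sqrt_eq_rpow]
    congr 1
    rw [show (16 * m : ℝ) = 4 ^ 2 * m by norm_num,
      Real.sqrt_mul (by positivity), Real.sqrt_sq (by norm_num)]
  have harg : Real.pi * ((8 * M : ℕ) : ℝ) / 64 = Real.pi * m / 8 := by push_cast; ring
  rw [h2N, hsq, harg, inv_mul_le_iff₀ (by positivity)]
  set s : ℝ := Real.sqrt m with hsdef
  have hs : (0 : ℝ) < s := Real.sqrt_pos.mpr (by linarith)
  have hss : s * s = m := Real.mul_self_sqrt hm0
  by_cases hM2 : 2 ≤ M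
  · have hm2 : (2 : ℝ) ≤ m := hm2' hM2
    have hp : (0 : ℝ) < (2 : ℝ) ^ (8 * M) := by positivity
    have hcR : (2 : ℝ) ^ (8 * M) * 3 ^ (6 * M) ≤ 8 * m * ((c : ℝ) * 4 ^ (8 * M)) := hcR'
    have h4 : (4 : ℝ) ^ (8 * M) = 2 ^ (8 * M) * 2 ^ (8 * M) := by
      rw [show (4 : ℝ) = 2 * 2 by norm_num, mul_pow]
    have h3le : (3 : ℝ) ^ (6 * M) ≤ 8 * m * c * 2 ^ (8 * M) := by
      rw [h4] at hcR
      have key : (3 : ℝ) ^ (6 * M) * 2 ^ (8 * M) ≤ (8 * m * c * 2 ^ (8 * M)) * 2 ^ (8 * M) := by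
        nlinarith [hcR]
      exact le_of_mul_le_mul_right key hp
    have hL : Real.exp (Real.pi * m / 8) * (2 * s) * 2 ^ (8 * M) ≤ 3 ^ (6 * M) := by
      have hLpos : (0 : ℝ) < Real.exp (Real.pi * m / 8) * (2 * s) * 2 ^ (8 * M) := by positivity
      rw [← Real.log_le_log_iff hLpos (by positivity), Real.log_mul (by positivity)
        (by positivity), Real.log_mul (by positivity) (by positivity),
        Real.log_exp, Real.log_mul (by norm_num) (ne_of_gt hs), Real.log_pow, Real.log_pow]
      have hlogs : Real.log s = Real.log m / 2 := Real.log_sqrt hm0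
      have hlogm : Real.log m ≤ Real.log 2 + (m / 2 - 1) := by
        have e : Real.log m = Real.log 2 + Real.log (m / 2) := by
          rw [← Real.log_mul (by norm_num) (by positivity)]
          congr 1; ring
        have := Real.log_le_sub_one_of_pos (show (0:ℝ) < m / 2 by linarith)
        linarith
      have c1 := Real.pi_lt_d2
      have c2 := Real.log_two_lt_d9
      have c2' := Real.log_two_gt_d9
      have c3 := stmt4_log_three_gt
      push_cast
      nlinarith [mul_le_mul_of_nonneg_right c1.le hm0,
        mul_le_mul_of_nonneg_right c2.le hm0,
        mul_le_mul_of_nonneg_right c3.le hm0, hlogs, hlogm, hm2]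
    have e1 : Real.exp (Real.pi * m / 8) * (2 * s) ≤ 8 * m * c :=
      le_of_mul_le_mul_right (hL.trans h3le) hp
    nlinarith [mul_le_mul_of_nonneg_right e1 hs.le, hss, hs, hm2,
      Real.exp_pos (Real.pi * m / 8), hc1R]
  · have hMeq : M = 1 := by omega
    have hmeq : m = 1 := by rw [hm, hMeq]; norm_num
    have hs1 : s = 1 := by rw [hsdef, hmeq, Real.sqrt_one]
    have hpi : Real.pi * m / 8 ≤ 1 := by
      rw [hmeq]
      have h4 : Real.pi < 4 := Real.pi_lt_four
      linarith
    have hee : Real.exp (Real.pi * m / 8) ≤ Real.exp 1 := Real.exp_le_exp.mpr hpi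
    have h9 := Real.exp_one_lt_d9
    rw [hs1]
    linarith [hee, h9, hc1R]

theorem stmt4 (N : ℕ) (hN : 0 < N) (h8 : 8 ∣ N) :
    ∃ F' : Finset (Fin N → Bool),
      (∀ f ∈ F', Nat.card {i : Fin N // f i = true} = N / 2) ∧
      (∀ f ∈ F', ∀ g ∈ F', f ≠ g → N / 4 < hammingDist f g) ∧
      (2 * (N : ℝ)) ^ (-(1 / 2 : ℝ)) * Real.exp (Real.pi * N / 64) ≤ (F'.card : ℝ) := by
  classical
  obtain ⟨M, rfl⟩ := h8
  have hM : 1 ≤ M := by omega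
  set F : Finset (Fin (8 * M) → Bool) :=
    Finset.univ.filter (fun f => (Finset.univ.filter fun i => f i = true).card = 4 * M) with hF
  have hFcard : 2 ^ (8 * M) ≤ 8 * M * F.card := by
    have h1 := Nat.four_pow_le_two_mul_self_mul_centralBinom (4 * M) (by omega)
    have h2 : Nat.centralBinom (4 * M) = (8 * M).choose (4 * M) := by
      unfold Nat.centralBinom; congr 1; ring
    have h3 : ((Finset.univ : Finset (Fin (8 * M))).powersetCard (4 * M)).card ≤ F.card := by
      apply Finset.card_le_card_of_injOn (fun (s : Finset (Fin (8 * M))) => fun i => decide (i ∈ s))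
      · intro s hs
        rw [Finset.mem_coe, Finset.mem_powersetCard_univ] at hs
        rw [Finset.mem_coe, hF, Finset.mem_filter]
        refine ⟨Finset.mem_univ _, ?_⟩
        rw [← hs]
        congr 1
        ext i
        simp
      · intro s _ t _ h
        ext i
        have := congrFun h i
        simpa using this
    have h4 : ((Finset.univ : Finset (Fin (8 * M))).powersetCard (4 * M)).card
        = (8 * M).choose (4 * M) := by
      rw [Finset.card_powersetCard, Finset.card_univ, Fintype.card_fin]
    have h5 : (2 : ℕ) ^ (8 * M) = 4 ^ (4 * M) := by
      rw [show 8 * M = 2 * (4 * M) by ring, pow_mul]; norm_num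
    calc (2:ℕ) ^ (8 * M) = 4 ^ (4 * M) := h5
      _ ≤ 2 * (4 * M) * Nat.centralBinom (4 * M) := h1
      _ = 8 * M * ((8 * M).choose (4 * M)) := by rw [h2]; ring
      _ ≤ 8 * M * F.card := Nat.mul_le_mul_left _ (h4 ▸ h3)
  set P : Finset (Finset (Fin (8 * M) → Bool)) :=
    F.powerset.filter (fun S => ∀ f ∈ S, ∀ g ∈ S, f ≠ g → 2 * M < hammingDist f g) with hP
  have hPne : P.Nonempty := ⟨∅, by simp [hP]⟩
  obtain ⟨F', hF'P, hmax⟩ := P.exists_max_image Finset.card hPne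
  rw [hP, Finset.mem_filter, Finset.mem_powerset] at hF'P
  obtain ⟨hF'sub, hsep⟩ := hF'P
  refine ⟨F', ?_, ?_, ?_⟩
  · intro f hf
    have hfF := hF'sub hf
    rw [hF, Finset.mem_filter] at hfF
    rw [Nat.card_eq_fintype_card, Fintype.card_subtype]
    omega
  · intro f hf g hg hne
    have h := hsep f hf g hg hne
    have h24 : 8 * M / 4 = 2 * M := by omega
    rw [h24]
    exact h
  · have hFpos : 0 < F.card := by
      have h0 : 0 < 2 ^ (8 * M) := by positivity
      by_contra h
      push_neg at h
      have hz : F.card = 0 := by omega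
      rw [hz, Nat.mul_zero] at hFcard
      omega
    obtain ⟨g₀, hg₀⟩ := Finset.card_pos.mp hFpos
    have hF'1 : 1 ≤ F'.card := by
      have hsing : ({g₀} : Finset (Fin (8 * M) → Bool)) ∈ P := by
        rw [hP, Finset.mem_filter, Finset.mem_powerset]
        refine ⟨Finset.singleton_subset_iff.mpr hg₀, ?_⟩
        intro f hf g hg hne
        rw [Finset.mem_singleton] at hf hg
        exact absurd (hf.trans hg.symm) hne
      have := hmax _ hsing
      simpa using this
    have hcov : ∀ f ∈ F, ∃ g ∈ F', hammingDist f g ≤ 2 * M := by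
      intro f hf
      by_contra hcon
      push_neg at hcon
      have hfF' : f ∉ F' := by
        intro hf'
        have := hcon f hf'
        simp [hammingDist_self] at this
      have hins : insert f F' ∈ P := by
        rw [hP, Finset.mem_filter, Finset.mem_powerset]
        refine ⟨Finset.insert_subset hf hF'sub, ?_⟩
        intro a ha b hb hne
        rw [Finset.mem_insert] at ha hb
        rcases ha with rfl | ha
        · rcases hb with rfl | hb
          · exact absurd rfl hne
          · exact hcon b hb
        · rcases hb with rfl | hb
          · rw [hammingDist_comm]; exact hcon a ha
          · exact hsep a ha b hb hne
      have := hmax _ hins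
      rw [Finset.card_insert_of_notMem hfF'] at this
      omega
    have hcount : F.card * 3 ^ (6 * M) ≤ F'.card * 4 ^ (8 * M) := by
      have hsub : F ⊆ F'.biUnion
          (fun g => Finset.univ.filter fun f => hammingDist f g ≤ 2 * M) := by
        intro f hf
        rw [Finset.mem_biUnion]
        obtain ⟨g, hg, hd⟩ := hcov f hf
        exact ⟨g, hg, Finset.mem_filter.mpr ⟨Finset.mem_univ _, hd⟩⟩
      have h1 : F.card ≤ ∑ g ∈ F',
          (Finset.univ.filter fun f => hammingDist f g ≤ 2 * M).card :=
        le_trans (Finset.card_le_card hsub) Finset.card_biUnion_le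
      calc F.card * 3 ^ (6 * M)
          ≤ (∑ g ∈ F', (Finset.univ.filter fun f => hammingDist f g ≤ 2 * M).card)
              * 3 ^ (6 * M) := Nat.mul_le_mul_right _ h1
        _ = ∑ g ∈ F',
            (Finset.univ.filter fun f => hammingDist f g ≤ 2 * M).card * 3 ^ (6 * M) := by
            rw [Finset.sum_mul]
        _ ≤ ∑ _g ∈ F', 4 ^ (8 * M) := by
            apply Finset.sum_le_sum
            intro g _
            have hb := stmt4_ball_bound (8 * M) (2 * M) g
            rwa [show 8 * M - 2 * M = 6 * M by omega] at hb
        _ = F'.card * 4 ^ (8 * M) := by rw [Finset.sum_const, smul_eq_mul]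
    have hchain : 2 ^ (8 * M) * 3 ^ (6 * M) ≤ 8 * M * (F'.card * 4 ^ (8 * M)) := by
      calc 2 ^ (8 * M) * 3 ^ (6 * M) ≤ (8 * M * F.card) * 3 ^ (6 * M) :=
            Nat.mul_le_mul_right _ hFcard
        _ = 8 * M * (F.card * 3 ^ (6 * M)) := by ring
        _ ≤ 8 * M * (F'.card * 4 ^ (8 * M)) := Nat.mul_le_mul_left _ hcount
    exact stmt4_final_ineq M F'.card hM hF'1 hchain
end

section
/- The Lebesgue measure on [0,1], viewed as a probability measure, satisfies: for each integer N ≥ 1, the probability measure ν_N = (1/N) Σ_{j=1}^N δ_{(2j−1)/(2N)} satisfies W_q(ν_N, Leb) = 1/(2(q+1)^{1/q} N), and ν_N minimizes W_q-distance to Lebesgue among probability measures supported on at most N points; consequently Q_Leb(ε) = ⌈1/(2(q+1)^{1/q} ε)⌉. -/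
open MeasureTheory Filter Metric Set
open scoped NNReal ENNReal

noncomputable section

/-- The set of transport plans (couplings) between two measures. -/
def couplings {X : Type*} [MeasurableSpace X] (μ ν : Measure X) : Set (Measure (X × X)) :=
  {π | π.map Prod.fst = μ ∧ π.map Prod.snd = ν}

/-- The `p`-Wasserstein distance between two measures. -/
noncomputable def Wass {X : Type*} [MetricSpace X] [MeasurableSpace X] (p : ℝ)
    (μ ν : Measure X) : ℝ :=
  sInf ((fun π : Measure (X × X) => (∫ z, dist z.1 z.2 ^ p ∂π) ^ (1 / p)) '' couplings μ ν)

/-- Covering number: minimal cardinality of an `ε`-dense set. -/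
noncomputable def coverNum (X : Type*) [MetricSpace X] (ε : ℝ) : ℕ :=
  sInf {n | ∃ F : Finset X, F.card = n ∧ ∀ x : X, ∃ y ∈ F, dist x y ≤ ε}

/-- Packing number: maximal cardinality of an `ε`-separated set. -/
noncomputable def packNum (X : Type*) [MetricSpace X] (ε : ℝ) : ℕ :=
  sSup {n | ∃ F : Finset X, F.card = n ∧ ∀ x ∈ F, ∀ y ∈ F, x ≠ y → ε < dist x y}

/-- The (topological) support of a measure. -/
def msupport {X : Type*} [TopologicalSpace X] [MeasurableSpace X] (μ : Measure X) : Set X :=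
  {x | ∀ U : Set X, IsOpen U → x ∈ U → 0 < μ U}

/-- Quantization number of `μ` at scale `ε` w.r.t. the `q`-Wasserstein metric. -/
noncomputable def quantW {Y : Type*} [MetricSpace Y] [MeasurableSpace Y] (q : ℝ)
    (μ : Measure Y) (ε : ℝ) : ℕ :=
  sInf {n | ∃ ν : Measure Y, IsProbabilityMeasure ν ∧
    (∃ S : Finset Y, S.card = n ∧ ν (↑S)ᶜ = 0) ∧ Wass q μ ν ≤ ε}

end


lemma Wass_one_eq {X : Type*} [MetricSpace X] [MeasurableSpace X] (μ ν : Measure X) :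
    Wass 1 μ ν = sInf ((fun π : Measure (X × X) => ∫ z, dist z.1 z.2 ∂π) '' couplings μ ν) := by
  unfold Wass
  norm_num [Real.rpow_one]

lemma cost_nonneg {X : Type*} [MetricSpace X] [MeasurableSpace X] (π : Measure (X × X)) :
    0 ≤ ∫ z : X × X, dist z.1 z.2 ∂π :=
  integral_nonneg fun z => dist_nonneg

lemma swap_mem_couplings {X : Type*} [MeasurableSpace X] {μ ν : Measure X}
    {π : Measure (X × X)} (h : π ∈ couplings μ ν) : π.map Prod.swap ∈ couplings ν μ := by
  obtain ⟨h1, h2⟩ := h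
  constructor
  · rw [Measure.map_map measurable_fst measurable_swap]; exact h2
  · rw [Measure.map_map measurable_snd measurable_swap]; exact h1

lemma wass_one_symm {X : Type*} [MetricSpace X] [MeasurableSpace X] [BorelSpace X]
    [SecondCountableTopology X] (μ ν : Measure X) : Wass 1 μ ν = Wass 1 ν μ := by
  rw [Wass_one_eq, Wass_one_eq]
  congr 1
  have key : ∀ (α β : Measure X), ((fun π : Measure (X × X) => ∫ z, dist z.1 z.2 ∂π) '' couplings α β)
      ⊆ ((fun π : Measure (X × X) => ∫ z, dist z.1 z.2 ∂π) '' couplings β α) := by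
    intro α β r hr
    obtain ⟨π, hπ, rfl⟩ := hr
    refine ⟨π.map Prod.swap, swap_mem_couplings hπ, ?_⟩
    show (∫ z : X × X, dist z.1 z.2 ∂(π.map Prod.swap)) = _
    rw [integral_map measurable_swap.aemeasurable
      ((continuous_fst.dist continuous_snd)).aestronglyMeasurable]
    simp [dist_comm]
  exact Set.Subset.antisymm (key μ ν) (key ν μ)


lemma A1 (S : Finset ℝ) (hS : S.Nonempty) {N : ℕ} (hN : 1 ≤ N) (hcard : S.card ≤ N) :
    ENNReal.ofReal (1/(4*N)) ≤ ∫⁻ x in Icc (0:ℝ) 1, ENNReal.ofReal (infDist x ↑S) ∂volume := by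
  set μ := volume.restrict (Icc (0:ℝ) 1) with hμ
  have hN0 : (0:ℝ) < N := by exact_mod_cast hN
  have hcont : Continuous fun x : ℝ => infDist x ↑S := continuous_infDist_pt _
  rw [lintegral_eq_lintegral_meas_lt μ (Eventually.of_forall fun x => infDist_nonneg)
    hcont.measurable.aemeasurable]
  -- pointwise lower bound on the measure of superlevel sets
  have key : ∀ t : ℝ, 0 < t → ENNReal.ofReal (1 - 2*N*t) ≤ μ {a : ℝ | t < infDist a ↑S} := by
    intro t ht
    have hcover : {a : ℝ | infDist a ↑S ≤ t} ⊆ ⋃ s ∈ S, closedBall s t := by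
      intro a ha
      obtain ⟨y, hy, hyd⟩ := S.finite_toSet.isCompact.exists_infDist_eq_dist
        (by exact_mod_cast hS) a
      exact Set.mem_biUnion hy (by simpa [mem_closedBall, dist_comm, ← hyd] using ha)
    have hle : μ {a : ℝ | infDist a ↑S ≤ t} ≤ ENNReal.ofReal (2*N*t) := by
      refine le_trans (measure_mono (fun a ha => hcover ha)) ?_
      calc μ (⋃ s ∈ S, closedBall s t) ≤ ∑ s ∈ S, μ (closedBall s t) := measure_biUnion_finset_le S _
        _ ≤ ∑ s ∈ S, ENNReal.ofReal (2*t) := by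
            refine Finset.sum_le_sum fun s _ => ?_
            rw [hμ, Measure.restrict_apply measurableSet_closedBall]
            refine le_trans (measure_mono inter_subset_left) ?_
            rw [Real.volume_closedBall]
        _ = S.card * ENNReal.ofReal (2*t) := by rw [Finset.sum_const, nsmul_eq_mul]
        _ ≤ (N:ℝ≥0∞) * ENNReal.ofReal (2*t) := mul_le_mul_left (by exact_mod_cast hcard) _
        _ = ENNReal.ofReal (2*N*t) := by
            rw [← ENNReal.ofReal_natCast N, ← ENNReal.ofReal_mul (by positivity)]
            ring_nf
    have hone : (1:ℝ≥0∞) ≤ μ {a : ℝ | t < infDist a ↑S} + ENNReal.ofReal (2*N*t) := by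
      have : μ univ = 1 := by simp [hμ]
      calc (1:ℝ≥0∞) = μ univ := this.symm
        _ ≤ μ ({a : ℝ | t < infDist a ↑S} ∪ {a : ℝ | infDist a ↑S ≤ t}) := by
            refine measure_mono fun a _ => ?_
            rcases lt_or_ge t (infDist a ↑S) with h | h
            · exact Or.inl h
            · exact Or.inr h
        _ ≤ _ := le_trans (measure_union_le _ _) (by gcongr)
    calc ENNReal.ofReal (1 - 2*N*t) ≤ 1 - ENNReal.ofReal (2*N*t) := by
          rw [ENNReal.ofReal_sub _ (by positivity)]; simp
      _ ≤ μ {a : ℝ | t < infDist a ↑S} := by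
          rw [tsub_le_iff_right]; exact hone
  set a : ℝ := 1/(2*N) with ha
  have ha0 : 0 < a := by positivity
  have hNne : (N:ℝ) ≠ 0 := ne_of_gt hN0
  calc ENNReal.ofReal (1/(4*N))
      = ENNReal.ofReal (∫ t in Ioc 0 a, (1 - 2*N*t)) := by
        congr 1
        rw [← intervalIntegral.integral_of_le (le_of_lt ha0)]
        rw [intervalIntegral.integral_sub intervalIntegrable_const
          (Continuous.intervalIntegrable (by continuity) 0 a)]
        rw [intervalIntegral.integral_const]
        have : ∀ t:ℝ, 2*(N:ℝ)*t = 2*N*t := fun t => rfl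
        rw [show (fun t:ℝ => 2*(N:ℝ)*t) = (fun t:ℝ => (2*(N:ℝ))*t) from rfl]
        rw [intervalIntegral.integral_const_mul, integral_id, ha, smul_eq_mul]
        have harith : ∀ b : ℝ, b ≠ 0 →
            (1:ℝ)/(4*b) = (1/(2*b) - 0) * 1 - 2*b*(((1/(2*b))^2 - 0^2)/2) := by
          intro b hb; field_simp; ring
        exact harith N hNne
    _ = ∫⁻ t in Ioc 0 a, ENNReal.ofReal (1 - 2*N*t) := by
        refine ofReal_integral_eq_lintegral_ofReal ?_ ?_
        · exact ((continuous_const.sub (by continuity)).integrableOn_Icc).mono_set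
            Ioc_subset_Icc_self
        · refine (ae_restrict_iff' measurableSet_Ioc).2 (Eventually.of_forall fun t ht => ?_)
          have h1 : t ≤ a := ht.2
          rw [ha] at h1
          have h3 : (0:ℝ) < 2*N := by positivity
          have h2 : 2*(N:ℝ)*t ≤ 1 := by
            calc 2*(N:ℝ)*t ≤ 2*N*(1/(2*N)) := by nlinarith
              _ = 1 := by field_simp
          show (0:ℝ) ≤ 1 - 2*N*t
          linarith
    _ ≤ ∫⁻ t in Ioc 0 a, μ {x : ℝ | t < infDist x ↑S} := by
        exact setLIntegral_mono' measurableSet_Ioc fun t ht => key t ht.1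
    _ ≤ ∫⁻ t in Ioi 0, μ {x : ℝ | t < infDist x ↑S} := by
        exact lintegral_mono_set fun t ht => ht.1

lemma Leb01_prob : IsProbabilityMeasure (volume.restrict (Icc (0:ℝ) 1)) :=
  ⟨by simp [Real.volume_Icc]⟩

lemma wass_ge {N : ℕ} (hN : 1 ≤ N) (ν : Measure ℝ) (hprob : IsProbabilityMeasure ν)
    (S : Finset ℝ) (hcard : S.card ≤ N) (hν : ν (↑S)ᶜ = 0) :
    1/(4*(N:ℝ)) ≤ Wass 1 (volume.restrict (Icc (0:ℝ) 1)) ν := by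
  haveI := Leb01_prob
  haveI := hprob
  have hN0 : (0:ℝ) < N := by exact_mod_cast hN
  -- S is nonempty
  have hS : S.Nonempty := by
    rcases S.eq_empty_or_nonempty with h | h
    · exfalso
      rw [h] at hν
      simp at hν
    · exact h
  rw [Wass_one_eq]
  apply le_csInf
  · exact ⟨_, ⟨(volume.restrict (Icc (0:ℝ) 1)).prod ν, ⟨by simp, by simp⟩, rfl⟩⟩
  rintro b ⟨π, ⟨hπ1, hπ2⟩, rfl⟩
  show 1/(4*(N:ℝ)) ≤ ∫ z : ℝ × ℝ, dist z.1 z.2 ∂π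
  haveI : IsProbabilityMeasure π := by
    constructor
    have : (π.map Prod.fst) univ = 1 := by rw [hπ1]; exact measure_univ
    rwa [Measure.map_apply measurable_fst MeasurableSet.univ, preimage_univ] at this
  -- a.e. facts
  have hae1 : ∀ᵐ z : ℝ × ℝ ∂π, z.1 ∈ Icc (0:ℝ) 1 := by
    rw [ae_iff]
    have : {z : ℝ × ℝ | ¬ z.1 ∈ Icc (0:ℝ) 1} = Prod.fst ⁻¹' (Icc (0:ℝ) 1)ᶜ := rfl
    rw [this, ← Measure.map_apply measurable_fst measurableSet_Icc.compl, hπ1,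
      Measure.restrict_apply measurableSet_Icc.compl]
    simp
  have hae2 : ∀ᵐ z : ℝ × ℝ ∂π, z.2 ∈ (↑S : Set ℝ) := by
    rw [ae_iff]
    have : {z : ℝ × ℝ | ¬ z.2 ∈ (↑S : Set ℝ)} = Prod.snd ⁻¹' (↑S : Set ℝ)ᶜ := rfl
    rw [this, ← Measure.map_apply measurable_snd (S.measurableSet.compl), hπ2]
    exact hν
  -- boundedness and integrability
  set M : ℝ := S.sup' hS (fun s => |s|) with hM
  have hbound : ∀ᵐ z : ℝ × ℝ ∂π, ‖dist z.1 z.2‖ ≤ 1 + M := by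
    filter_upwards [hae1, hae2] with z h1 h2
    rw [Real.norm_eq_abs, abs_of_nonneg dist_nonneg, Real.dist_eq]
    have h3 : |z.1| ≤ 1 := by
      rw [abs_le]; exact ⟨by linarith [h1.1], h1.2⟩
    have h4 : |z.2| ≤ M := Finset.le_sup' (fun s => |s|) h2
    calc |z.1 - z.2| ≤ |z.1| + |z.2| := abs_sub _ _
      _ ≤ 1 + M := by linarith
  have hmeas : AEStronglyMeasurable (fun z : ℝ × ℝ => dist z.1 z.2) π :=
    (continuous_fst.dist continuous_snd).aestronglyMeasurable
  have hint : Integrable (fun z : ℝ × ℝ => dist z.1 z.2) π :=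
    Integrable.mono' (integrable_const (1 + M)) hmeas hbound
  -- pass to lintegral
  rw [integral_eq_lintegral_of_nonneg_ae (Eventually.of_forall fun z => dist_nonneg) hmeas]
  have hfin : (∫⁻ z : ℝ × ℝ, ENNReal.ofReal (dist z.1 z.2) ∂π) < ⊤ := by
    have := hint.2
    rw [hasFiniteIntegral_def] at this
    refine lt_of_le_of_lt (lintegral_mono fun z => ?_) this
    exact Real.ofReal_le_enorm _
  have hchain : ENNReal.ofReal (1/(4*(N:ℝ))) ≤ ∫⁻ z : ℝ × ℝ, ENNReal.ofReal (dist z.1 z.2) ∂π := by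
    calc ENNReal.ofReal (1/(4*(N:ℝ)))
        ≤ ∫⁻ x in Icc (0:ℝ) 1, ENNReal.ofReal (infDist x ↑S) ∂volume := A1 S hS hN hcard
      _ = ∫⁻ x, ENNReal.ofReal (infDist x ↑S) ∂(π.map Prod.fst) := by rw [hπ1]
      _ = ∫⁻ z : ℝ × ℝ, ENNReal.ofReal (infDist z.1 ↑S) ∂π := by
          rw [lintegral_map (by measurability) measurable_fst]
      _ ≤ _ := by
          refine lintegral_mono_ae ?_
          filter_upwards [hae2] with z h2
          exact ENNReal.ofReal_le_ofReal (infDist_le_dist_of_mem h2)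
  calc 1/(4*(N:ℝ)) = (ENNReal.ofReal (1/(4*(N:ℝ)))).toReal := by
        rw [ENNReal.toReal_ofReal (by positivity)]
    _ ≤ _ := ENNReal.toReal_mono (ne_of_lt hfin) hchain



lemma interval_abs_integral (a b : ℝ) (hab : a ≤ b) :
    ∫ y in a..b, |(a+b)/2 - y| = (b-a)^2/4 := by
  set c : ℝ := (a+b)/2 with hc
  have hac : a ≤ c := by rw [hc]; linarith
  have hcb : c ≤ b := by rw [hc]; linarith
  have hint : ∀ u v : ℝ, IntervalIntegrable (fun y => |c - y|) volume u v :=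
    fun u v => (Continuous.intervalIntegrable (by continuity) u v)
  rw [← intervalIntegral.integral_add_adjacent_intervals (hint a c) (hint c b)]
  have h1 : ∫ y in a..c, |c - y| = ∫ y in a..c, (c - y) := by
    refine intervalIntegral.integral_congr fun y hy => ?_
    rw [uIcc_of_le hac] at hy
    exact abs_of_nonneg (by linarith [hy.2])
  have h2 : ∫ y in c..b, |c - y| = ∫ y in c..b, (y - c) := by
    refine intervalIntegral.integral_congr fun y hy => ?_
    rw [uIcc_of_le hcb] at hy
    rw [abs_of_nonpos (by linarith [hy.1])]
    ring
  rw [h1, h2, intervalIntegral.integral_sub intervalIntegrable_const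
    ((continuous_id' : Continuous fun y:ℝ => y).intervalIntegrable a c),
    intervalIntegral.integral_sub ((continuous_id' : Continuous fun y:ℝ => y).intervalIntegrable c b)
    intervalIntegrable_const, integral_id, integral_id,
    intervalIntegral.integral_const, intervalIntegral.integral_const]
  rw [hc]
  simp only [smul_eq_mul]
  ring

lemma Measure.map_finset_sum {ι α β : Type*} [MeasurableSpace α] [MeasurableSpace β]
    (s : Finset ι) (μ : ι → Measure α) {f : α → β} (hf : Measurable f) :
    (∑ i ∈ s, μ i).map f = ∑ i ∈ s, (μ i).map f := by
  classical
  induction s using Finset.induction with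
  | empty => simp
  | insert _ _ h ih => rw [Finset.sum_insert h, Finset.sum_insert h, Measure.map_add _ _ hf, ih]

section constr
variable (N : ℕ)

noncomputable def cpt (j : Fin N) : ℝ := (2*(j:ℝ)+1)/(2*N)
def IcoJ (j : Fin N) : Set ℝ := Ico ((j:ℝ)/N) (((j:ℝ)+1)/N)
noncomputable def piN : Measure (ℝ × ℝ) :=
  ∑ j : Fin N, (volume.restrict (IcoJ N j)).map (fun y => (cpt N j, y))

variable {N}

lemma IcoJ_vol (hN : 1 ≤ N) (j : Fin N) :
    volume (IcoJ N j) = ENNReal.ofReal (1/(N:ℝ)) := by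
  have hN0 : (0:ℝ) < N := by exact_mod_cast hN
  rw [IcoJ, Real.volume_Ico]
  congr 1
  field_simp
  ring

lemma IcoJ_disj : Pairwise (Function.onFun Disjoint (IcoJ N)) := by
  have key : ∀ i j : Fin N, i < j →
      min (((i:ℝ)+1)/N) (((j:ℝ)+1)/N) ≤ max ((i:ℝ)/N) ((j:ℝ)/N) := by
    intro i j h
    have hN0 : (0:ℝ) < N := by exact_mod_cast i.pos
    have h1 : (i:ℝ)+1 ≤ (j:ℝ) := by
      have : (i:ℕ) + 1 ≤ (j:ℕ) := h
      exact_mod_cast this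
    calc min (((i:ℝ)+1)/N) (((j:ℝ)+1)/N) ≤ ((i:ℝ)+1)/N := min_le_left _ _
      _ ≤ (j:ℝ)/N := by gcongr
      _ ≤ max ((i:ℝ)/N) ((j:ℝ)/N) := le_max_right _ _
  intro i j hij
  rcases Ne.lt_or_gt hij with h | h
  · rw [Function.onFun, IcoJ, IcoJ, Set.Ico_disjoint_Ico]
    exact key i j h
  · rw [Function.onFun, IcoJ, IcoJ, Set.Ico_disjoint_Ico, min_comm, max_comm]
    exact key j i h

lemma IcoJ_union (hN : 1 ≤ N) : (⋃ j : Fin N, IcoJ N j) = Ico (0:ℝ) 1 := by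
  have hN0 : (0:ℝ) < N := by exact_mod_cast hN
  ext x
  simp only [mem_iUnion, IcoJ, mem_Ico]
  constructor
  · rintro ⟨j, h1, h2⟩
    have hj0 : (0:ℝ) ≤ (j:ℝ) := by positivity
    have hjN : ((j:ℝ)+1) ≤ N := by
      have : (j:ℕ) + 1 ≤ N := j.2
      exact_mod_cast this
    constructor
    · exact le_trans (by positivity) h1
    · calc x < ((j:ℝ)+1)/N := h2
        _ ≤ (N:ℝ)/N := by gcongr
        _ = 1 := by field_simp
  · rintro ⟨h0, h1⟩
    have hx : 0 ≤ (N:ℝ)*x := by positivity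
    have hlt : ⌊(N:ℝ)*x⌋₊ < N := by
      rw [Nat.floor_lt hx]
      calc (N:ℝ)*x < N*1 := by nlinarith
        _ = N := mul_one _
    refine ⟨⟨⌊(N:ℝ)*x⌋₊, hlt⟩, ?_, ?_⟩
    · rw [div_le_iff₀ hN0]
      calc ((⟨⌊(N:ℝ)*x⌋₊, hlt⟩ : Fin N) : ℝ) = (⌊(N:ℝ)*x⌋₊ : ℝ) := rfl
        _ ≤ (N:ℝ)*x := Nat.floor_le hx
        _ = x * N := mul_comm _ _
    · rw [lt_div_iff₀ hN0]
      calc x * N = (N:ℝ)*x := mul_comm _ _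
        _ < ⌊(N:ℝ)*x⌋₊ + 1 := Nat.lt_floor_add_one _
        _ = ((⟨⌊(N:ℝ)*x⌋₊, hlt⟩ : Fin N) : ℝ) + 1 := rfl

lemma piN_fst (hN : 1 ≤ N) : (piN N).map Prod.fst
    = (N : ℝ≥0∞)⁻¹ • ∑ j : Fin N, Measure.dirac (cpt N j) := by
  have hN0 : (0:ℝ) < N := by exact_mod_cast hN
  rw [piN, Measure.map_finset_sum _ _ measurable_fst]
  have key : ∀ j : Fin N, ((volume.restrict (IcoJ N j)).map (fun y => (cpt N j, y))).map Prod.fst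
      = (N : ℝ≥0∞)⁻¹ • Measure.dirac (cpt N j) := by
    intro j
    rw [Measure.map_map measurable_fst (measurable_const.prodMk measurable_id : Measurable fun y : ℝ => (cpt N j, y))]
    show (volume.restrict (IcoJ N j)).map (fun _ => cpt N j) = _
    rw [Measure.map_const, Measure.restrict_apply_univ, IcoJ_vol hN]
    congr 1
    rw [one_div, ENNReal.ofReal_inv_of_pos hN0, ENNReal.ofReal_natCast]
  simp_rw [key]
  rw [← Finset.smul_sum]

lemma piN_snd (hN : 1 ≤ N) : (piN N).map Prod.snd = volume.restrict (Icc (0:ℝ) 1) := by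
  rw [piN, Measure.map_finset_sum _ _ measurable_snd]
  have key : ∀ j : Fin N,
      ((volume.restrict (IcoJ N j)).map (fun y => (cpt N j, y))).map Prod.snd
      = volume.restrict (IcoJ N j) := by
    intro j
    rw [Measure.map_map measurable_snd (measurable_const.prodMk measurable_id : Measurable fun y : ℝ => (cpt N j, y))]
    exact Measure.map_id'
  simp_rw [key]
  rw [← Measure.sum_fintype, ← Measure.restrict_iUnion IcoJ_disj (fun j => measurableSet_Ico),
    IcoJ_union hN]
  exact Measure.restrict_congr_set Ico_ae_eq_Icc

lemma piN_cost (hN : 1 ≤ N) : ∫ z : ℝ × ℝ, dist z.1 z.2 ∂(piN N) = 1/(4*(N:ℝ)) := by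
  have hN0 : (0:ℝ) < N := by exact_mod_cast hN
  have hintOn : ∀ j : Fin N,
      Integrable (fun y => dist (cpt N j) y) (volume.restrict (IcoJ N j)) :=
    fun j => ((continuous_const.dist continuous_id').integrableOn_Icc).mono_set
      Ico_subset_Icc_self
  have hint : ∀ j : Fin N, Integrable (fun z : ℝ × ℝ => dist z.1 z.2)
      ((volume.restrict (IcoJ N j)).map (fun y => (cpt N j, y))) := by
    intro j
    refine (integrable_map_measure ?_ ?_).mpr (hintOn j)
    · exact (continuous_fst.dist continuous_snd).aestronglyMeasurable
    · exact (measurable_const.prodMk measurable_id :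
        Measurable fun y : ℝ => (cpt N j, y)).aemeasurable
  rw [piN, integral_finset_sum_measure (fun j _ => hint j)]
  have key : ∀ j : Fin N, ∫ z : ℝ × ℝ, dist z.1 z.2
      ∂((volume.restrict (IcoJ N j)).map (fun y => (cpt N j, y))) = 1/(4*(N:ℝ)^2) := by
    intro j
    rw [integral_map (measurable_const.prodMk measurable_id :
        Measurable fun y : ℝ => (cpt N j, y)).aemeasurable
      (continuous_fst.dist continuous_snd).aestronglyMeasurable]
    simp only [Real.dist_eq]
    set a : ℝ := (j:ℝ)/N with hA
    set b : ℝ := ((j:ℝ)+1)/N with hB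
    have hab : a ≤ b := by rw [hA, hB]; gcongr; linarith
    have hc : cpt N j = (a+b)/2 := by rw [cpt, hA, hB]; field_simp; ring
    have : ∫ y in IcoJ N j, |cpt N j - y| = ∫ y in a..b, |(a+b)/2 - y| := by
      rw [IcoJ, integral_Ico_eq_integral_Ioo, ← integral_Ioc_eq_integral_Ioo,
        ← intervalIntegral.integral_of_le hab, hc]
    rw [this, interval_abs_integral a b hab]
    rw [hA, hB]
    field_simp
    ring
  simp_rw [key]
  rw [Finset.sum_const, Finset.card_univ, Fintype.card_fin, nsmul_eq_mul]
  field_simp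


section final
variable {N : ℕ}

lemma cpt_inj (hN : 1 ≤ N) : Function.Injective (cpt N) := by
  intro i j hij
  have hN0 : (0:ℝ) < N := by exact_mod_cast hN
  rw [cpt, cpt, div_eq_div_iff (by positivity) (by positivity)] at hij
  have : (i:ℝ) = (j:ℝ) := by nlinarith
  have : (i:ℕ) = (j:ℕ) := by exact_mod_cast this
  exact Fin.ext this

lemma nuN_prob (hN : 1 ≤ N) :
    IsProbabilityMeasure ((N : ℝ≥0∞)⁻¹ • ∑ j : Fin N, Measure.dirac (cpt N j)) := by
  constructor
  rw [Measure.smul_apply, smul_eq_mul]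
  have : (∑ j : Fin N, Measure.dirac (cpt N j)) univ = N := by
    rw [Measure.coe_finset_sum]
    simp
  rw [this, ENNReal.inv_mul_cancel (Nat.cast_ne_zero.mpr (Nat.one_le_iff_ne_zero.mp hN))
    (ENNReal.natCast_ne_top N)]

lemma nuN_null (hN : 1 ≤ N) :
    ((N : ℝ≥0∞)⁻¹ • ∑ j : Fin N, Measure.dirac (cpt N j))
      (↑(Finset.image (cpt N) Finset.univ) : Set ℝ)ᶜ = 0 := by
  rw [Measure.smul_apply, smul_eq_mul]
  have : (∑ j : Fin N, Measure.dirac (cpt N j))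
      (↑(Finset.image (cpt N) Finset.univ) : Set ℝ)ᶜ = 0 := by
    rw [Measure.coe_finset_sum, Finset.sum_apply]
    refine Finset.sum_eq_zero fun j _ => ?_
    rw [Measure.dirac_apply' _ (Finset.image (cpt N) Finset.univ).measurableSet.compl]
    refine Set.indicator_of_notMem ?_ _
    simp only [Set.mem_compl_iff, not_not, Finset.coe_image, Set.mem_image, Finset.mem_coe]
    exact ⟨j, Finset.mem_univ j, rfl⟩
  rw [this, mul_zero]

lemma wass_upper (hN : 1 ≤ N) :
    Wass 1 ((N : ℝ≥0∞)⁻¹ • ∑ j : Fin N, Measure.dirac (cpt N j))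
      (volume.restrict (Icc (0:ℝ) 1)) ≤ 1/(4*(N:ℝ)) := by
  rw [Wass_one_eq]
  refine csInf_le ⟨0, ?_⟩ ?_
  · rintro r ⟨π, _, rfl⟩
    exact cost_nonneg π
  · exact ⟨piN N, ⟨piN_fst hN, piN_snd hN⟩, piN_cost hN⟩

lemma part1 (hN : 1 ≤ N) :
    Wass 1 ((N : ℝ≥0∞)⁻¹ • ∑ j : Fin N, Measure.dirac (cpt N j))
      (volume.restrict (Icc (0:ℝ) 1)) = 1/(4*(N:ℝ)) := by
  refine le_antisymm (wass_upper hN) ?_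
  rw [wass_one_symm]
  exact wass_ge hN _ (nuN_prob hN) (Finset.image (cpt N) Finset.univ)
    (le_trans (Finset.card_image_le) (by simp)) (nuN_null hN)

lemma quant_algebra {n : ℕ} (hn : 1 ≤ n) {ε : ℝ} (hε : 0 < ε) :
    1/(4*(n:ℝ)) ≤ ε ↔ 1/(4*ε) ≤ (n:ℝ) := by
  have hn0 : (0:ℝ) < n := by exact_mod_cast hn
  rw [div_le_iff₀ (by positivity), div_le_iff₀ (by positivity)]
  constructor <;> intro h <;> nlinarith

end final

theorem stmt12 :
    (∀ N : ℕ, 1 ≤ N →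
      Wass 1 ((N : ℝ≥0∞)⁻¹ • ∑ j : Fin N, Measure.dirac ((2 * (j : ℝ) + 1) / (2 * N)))
          (volume.restrict (Set.Icc (0 : ℝ) 1)) = 1 / (4 * N) ∧
      ∀ ν : Measure ℝ, IsProbabilityMeasure ν →
        (∃ S : Finset ℝ, S.card ≤ N ∧ ν (↑S)ᶜ = 0) →
        1 / (4 * N) ≤ Wass 1 (volume.restrict (Set.Icc (0 : ℝ) 1)) ν) ∧
    ∀ ε : ℝ, 0 < ε →
      quantW 1 (volume.restrict (Set.Icc (0 : ℝ) 1)) ε = ⌈1 / (4 * ε)⌉₊ := by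
  constructor
  · intro N hN
    constructor
    · exact part1 hN
    · rintro ν hprob ⟨S, hcard, hν⟩
      exact wass_ge hN ν hprob S hcard hν
  · intro ε hε
    set m : ℕ := ⌈1/(4*ε)⌉₊ with hm
    have hm1 : 1 ≤ m := Nat.one_le_iff_ne_zero.mpr (by
      rw [hm]
      exact (Nat.ceil_pos.mpr (by positivity)).ne')
    have hmem : m ∈ {n | ∃ ν : Measure ℝ, IsProbabilityMeasure ν ∧
        (∃ S : Finset ℝ, S.card = n ∧ ν (↑S)ᶜ = 0) ∧
        Wass 1 (volume.restrict (Set.Icc (0:ℝ) 1)) ν ≤ ε} := by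
      refine ⟨(m : ℝ≥0∞)⁻¹ • ∑ j : Fin m, Measure.dirac (cpt m j), nuN_prob hm1,
        ⟨Finset.image (cpt m) Finset.univ, ?_, nuN_null hm1⟩, ?_⟩
      · rw [Finset.card_image_of_injective _ (cpt_inj hm1)]
        simp
      · rw [wass_one_symm]
        refine le_trans (wass_upper hm1) ?_
        rw [quant_algebra hm1 hε]
        exact Nat.le_ceil _
    rw [quantW]
    refine le_antisymm (Nat.sInf_le hmem) (le_csInf ⟨m, hmem⟩ ?_)
    rintro n ⟨ν, hprob, ⟨S, hcard, hν⟩, hW⟩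
    have hn1 : 1 ≤ n := by
      by_contra h
      push_neg at h
      interval_cases n
      rw [Finset.card_eq_zero] at hcard
      subst hcard
      simp at hν
    have hlow := wass_ge hn1 ν hprob S (le_of_eq hcard) hν
    have : 1/(4*(n:ℝ)) ≤ ε := le_trans hlow hW
    rw [quant_algebra hn1 hε] at this
    exact Nat.ceil_le.mpr this
end constr
end

section
/- Let Y be a compact metric space and μ, μ₁ probability measures on Y with μ ≥ t μ₁ for some t > 0 (i.e., μ − t μ₁ is a nonnegative measure). Then the W₁-quantization numbers satisfy Q_μ(tε) ≥ Q_{μ₁}(ε) for every ε > 0. -/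
open MeasureTheory Filter Metric Set
open scoped NNReal ENNReal

section Aux

variable {Y : Type*} [MetricSpace Y]

/-- Nearest point selector among `a :: l`. -/
noncomputable def sel (y a : Y) : List Y → Y
  | [] => a
  | b :: l => if dist y b ≤ dist y (sel y a l) then b else sel y a l

lemma sel_mem (y a : Y) (l : List Y) : sel y a l ∈ a :: l := by
  induction l with
  | nil => simp [sel]
  | cons b l ih =>
    simp only [sel]
    split
    · simp
    · rcases List.mem_cons.1 ih with h | h
      · simp [h]
      · simp [h]

lemma sel_le_head (y a c : Y) (l : List Y) : dist y (sel y a (c :: l)) ≤ dist y c := by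
  simp only [sel]
  split
  · exact le_refl _
  · next h => exact (not_le.1 h).le

lemma sel_le_tail (y a c : Y) (l : List Y) : dist y (sel y a (c :: l)) ≤ dist y (sel y a l) := by
  simp only [sel]
  split
  · next h => exact h
  · exact le_refl _

lemma sel_le (y a : Y) (l : List Y) : ∀ b ∈ a :: l, dist y (sel y a l) ≤ dist y b := by
  induction l with
  | nil =>
    intro b hb
    rcases List.mem_cons.1 hb with h | h
    · subst h; simp [sel]
    · simp at h
  | cons c l ih =>
    intro b hb
    rcases List.mem_cons.1 hb with h | h
    · subst h
      exact (sel_le_tail y b c l).trans (ih b List.mem_cons_self)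
    · rcases List.mem_cons.1 h with h' | h'
      · subst h'
        exact sel_le_head y a b l
      · exact (sel_le_tail y a c l).trans (ih b (List.mem_cons_of_mem _ h'))

variable [CompactSpace Y]

variable [MeasurableSpace Y] [BorelSpace Y]

lemma measurable_sel (a : Y) (l : List Y) : Measurable fun y => sel y a l := by
  induction l with
  | nil => simpa [sel] using measurable_const
  | cons b l ih =>
    simp only [sel]
    exact Measurable.ite
      (measurableSet_le (measurable_id.dist measurable_const) (measurable_id.dist ih))
      measurable_const ih

lemma integrable_of_bound {α : Type*} [MeasurableSpace α] (μ : Measure α) [IsFiniteMeasure μ]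
    (h : α → ℝ) (hm : AEStronglyMeasurable h μ) (C : ℝ) (h0 : ∀ x, 0 ≤ h x)
    (hC : ∀ x, h x ≤ C) : Integrable h μ :=
  Integrable.mono' (integrable_const C) hm
    (Filter.Eventually.of_forall fun x => by
      rw [Real.norm_eq_abs, abs_of_nonneg (h0 x)]; exact hC x)

lemma exists_bound : ∃ C : ℝ, ∀ x y : Y, dist x y ≤ C := by
  obtain ⟨C, hC⟩ := Metric.isBounded_iff.1 (isCompact_univ (X := Y)).isBounded
  exact ⟨C, fun x y => hC (mem_univ x) (mem_univ y)⟩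

lemma Wass_map_le (μ : Measure Y) [IsProbabilityMeasure μ] {g : Y → Y} (hg : Measurable g) :
    Wass 1 μ (μ.map g) ≤ ∫ y, dist y (g y) ∂μ := by
  have hpair : Measurable fun y => (y, g y) := measurable_id.prodMk hg
  have hcomp1 : (Prod.fst ∘ fun y : Y => (y, g y)) = id := rfl
  have hcomp2 : (Prod.snd ∘ fun y : Y => (y, g y)) = g := rfl
  have hmem : μ.map (fun y => (y, g y)) ∈ couplings μ (μ.map g) := by
    constructor
    · rw [Measure.map_map measurable_fst hpair, hcomp1, Measure.map_id]
    · rw [Measure.map_map measurable_snd hpair, hcomp2]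
  have hmg : Measurable fun z : Y × Y => dist z.1 z.2 := measurable_fst.dist measurable_snd
  have hcost : (fun π : Measure (Y × Y) => (∫ z, dist z.1 z.2 ^ (1 : ℝ) ∂π) ^ ((1:ℝ) / 1))
      (μ.map fun y => (y, g y)) = ∫ y, dist y (g y) ∂μ := by
    simp only [one_div_one, Real.rpow_one]
    rw [integral_map hpair.aemeasurable hmg.aestronglyMeasurable]
  have hbdd : BddBelow ((fun π : Measure (Y × Y) =>
      (∫ z, dist z.1 z.2 ^ (1:ℝ) ∂π) ^ ((1:ℝ) / 1)) '' couplings μ (μ.map g)) := by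
    refine ⟨0, ?_⟩
    rintro c ⟨π, _, rfl⟩
    exact Real.rpow_nonneg
      (integral_nonneg fun z => Real.rpow_nonneg dist_nonneg _) _
  exact hcost ▸ csInf_le hbdd ⟨μ.map (fun y => (y, g y)), hmem, rfl⟩

lemma le_Wass (μ ν : Measure Y) [IsProbabilityMeasure μ] [IsProbabilityMeasure ν]
    {g : Y → Y} (hg : Measurable g) {S : Set Y} (hS : MeasurableSet S) (hν : ν Sᶜ = 0)
    (h : ∀ x : Y, ∀ s ∈ S, dist x (g x) ≤ dist x s) :
    ∫ x, dist x (g x) ∂μ ≤ Wass 1 μ ν := by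
  obtain ⟨C, hC⟩ := exists_bound (Y := Y)
  have hmg : Measurable fun x => dist x (g x) := measurable_id.dist hg
  apply le_csInf
  · exact ⟨_, ⟨μ.prod ν, ⟨by simp, by simp⟩, rfl⟩⟩
  · rintro c ⟨π, ⟨h1, h2⟩, rfl⟩
    have hπ : IsProbabilityMeasure π := by
      constructor
      have : (π.map Prod.fst) univ = 1 := by rw [h1]; exact measure_univ
      rwa [Measure.map_apply measurable_fst MeasurableSet.univ, Set.preimage_univ] at this
    simp only [one_div_one, Real.rpow_one]
    have e1 : ∫ x, dist x (g x) ∂μ = ∫ z : Y × Y, dist z.1 (g z.1) ∂π := by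
      rw [← h1, integral_map measurable_fst.aemeasurable hmg.aestronglyMeasurable]
    rw [e1]
    have hae : ∀ᵐ z ∂π, z.2 ∈ S := by
      have h0 : π (Prod.snd ⁻¹' Sᶜ) = 0 := by
        rw [← Measure.map_apply measurable_snd hS.compl, h2]; exact hν
      rw [ae_iff]
      exact h0
    apply integral_mono_ae
    · exact integrable_of_bound π _ ((hmg.comp measurable_fst).aestronglyMeasurable) C
        (fun z => dist_nonneg) (fun z => hC _ _)
    · exact integrable_of_bound π _ ((measurable_fst.dist measurable_snd).aestronglyMeasurable) C
        (fun z => dist_nonneg) (fun z => hC _ _)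
    · filter_upwards [hae] with z hz
      exact h z.1 z.2 hz

end Aux

theorem stmt16 (Y : Type*) [MetricSpace Y] [CompactSpace Y] [MeasurableSpace Y] [BorelSpace Y]
    (μ μ₁ : Measure Y) [IsProbabilityMeasure μ] [IsProbabilityMeasure μ₁]
    (t : ℝ) (ht : 0 < t) (hle : (ENNReal.ofReal t) • μ₁ ≤ μ) (ε : ℝ) (hε : 0 < ε) :
    quantW 1 μ₁ ε ≤ quantW 1 μ (t * ε) := by
  have hNE : Nonempty Y := by
    by_contra h
    rw [not_nonempty_iff] at h
    have h1 : μ Set.univ = 1 := measure_univ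
    rw [Set.univ_eq_empty_iff.2 h, measure_empty] at h1
    exact zero_ne_one h1
  obtain ⟨C, hC⟩ := exists_bound (Y := Y)
  have htε : 0 < t * ε := mul_pos ht hε
  -- the set for `μ` at scale `t * ε` is nonempty
  have hBne : {n | ∃ ν : Measure Y, IsProbabilityMeasure ν ∧
      (∃ S : Finset Y, S.card = n ∧ ν (↑S)ᶜ = 0) ∧ Wass 1 μ ν ≤ t * ε}.Nonempty := by
    obtain ⟨S₀, hS₀⟩ := isCompact_univ.elim_finite_subcover (fun y : Y => Metric.ball y (t * ε))
      (fun y => isOpen_ball) (fun y _ => mem_iUnion.2 ⟨y, mem_ball_self htε⟩)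
    obtain ⟨s₀, hs₀⟩ : ∃ s₀, s₀ ∈ S₀ := by
      obtain ⟨y⟩ := hNE
      have := hS₀ (mem_univ y)
      simp only [mem_iUnion, exists_prop] at this
      exact ⟨this.choose, this.choose_spec.1⟩
    set f : Y → Y := fun y => sel y s₀ S₀.toList with hf_def
    have hf : Measurable f := measurable_sel _ _
    have hfS : ∀ y, f y ∈ (↑S₀ : Set Y) := by
      intro y
      rcases List.mem_cons.1 (sel_mem y s₀ S₀.toList) with h | h
      · show sel y s₀ S₀.toList ∈ (↑S₀ : Set Y); rw [h]; exact hs₀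
      · exact Finset.mem_toList.1 h
    have hSm : MeasurableSet (↑S₀ : Set Y) := S₀.finite_toSet.measurableSet
    refine ⟨S₀.card, μ.map f, Measure.isProbabilityMeasure_map hf.aemeasurable, ⟨S₀, rfl, ?_⟩, ?_⟩
    · rw [Measure.map_apply hf hSm.compl]
      convert measure_empty
      · ext y; simp [hfS y]
      · infer_instance
    · refine (Wass_map_le μ hf).trans ?_
      have hpt : ∀ y, dist y (f y) ≤ t * ε := by
        intro y
        have := hS₀ (mem_univ y)
        simp only [mem_iUnion, exists_prop] at this
        obtain ⟨s, hsS, hys⟩ := this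
        exact le_of_lt (lt_of_le_of_lt
          (sel_le y s₀ S₀.toList s (List.mem_cons_of_mem _ (Finset.mem_toList.2 hsS)))
          (mem_ball.1 hys))
      calc ∫ y, dist y (f y) ∂μ ≤ ∫ _, t * ε ∂μ := by
              apply integral_mono
              · exact integrable_of_bound μ _ (measurable_id.dist hf).aestronglyMeasurable C
                  (fun y => dist_nonneg) (fun y => hC _ _)
              · exact integrable_const _
              · exact hpt
        _ = t * ε := by simp
  -- main argument
  unfold quantW
  apply Nat.sInf_le
  have hmem := Nat.sInf_mem hBne
  obtain ⟨ν, hνP, ⟨S, hScard, hνS⟩, hW⟩ := hmem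
  have hSne : ∃ s₀, s₀ ∈ S := by
    by_contra h
    push_neg at h
    have hSempty : (↑S : Set Y) = ∅ := by
      ext y; simp [h y]
    have h1 : ν Set.univ = 1 := measure_univ
    rw [← compl_empty, ← hSempty, hνS] at h1
    exact zero_ne_one h1
  obtain ⟨s₀, hs₀⟩ := hSne
  set f : Y → Y := fun y => sel y s₀ S.toList with hf_def
  have hf : Measurable f := measurable_sel _ _
  have hfS : ∀ y, f y ∈ (↑S : Set Y) := by
    intro y
    rcases List.mem_cons.1 (sel_mem y s₀ S.toList) with h | h
    · show sel y s₀ S.toList ∈ (↑S : Set Y); rw [h]; exact hs₀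
    · exact Finset.mem_toList.1 h
  have hSm : MeasurableSet (↑S : Set Y) := S.finite_toSet.measurableSet
  have hmg : Measurable fun y => dist y (f y) := measurable_id.dist hf
  have hlow : ∫ y, dist y (f y) ∂μ ≤ Wass 1 μ ν :=
    le_Wass μ ν hf hSm hνS
      (fun x s hs => sel_le x s₀ S.toList s
        (List.mem_cons_of_mem _ (Finset.mem_toList.2 hs)))
  have hint_μ : Integrable (fun y => dist y (f y)) μ :=
    integrable_of_bound μ _ hmg.aestronglyMeasurable C (fun y => dist_nonneg) (fun y => hC _ _)
  have hsmul : ∫ y, dist y (f y) ∂((ENNReal.ofReal t) • μ₁) = t * ∫ y, dist y (f y) ∂μ₁ := by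
    rw [integral_smul_measure, ENNReal.toReal_ofReal ht.le, smul_eq_mul]
  have h2 : t * ∫ y, dist y (f y) ∂μ₁ ≤ ∫ y, dist y (f y) ∂μ := by
    rw [← hsmul]
    exact integral_mono_measure hle (Filter.Eventually.of_forall fun y => dist_nonneg) hint_μ
  have h3 : ∫ y, dist y (f y) ∂μ₁ ≤ ε :=
    le_of_mul_le_mul_left (h2.trans (hlow.trans hW)) ht
  refine ⟨μ₁.map f, Measure.isProbabilityMeasure_map hf.aemeasurable, ⟨S, hScard, ?_⟩,
    (Wass_map_le μ₁ hf).trans h3⟩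
  rw [Measure.map_apply hf hSm.compl]
  convert measure_empty
  · ext y; simp [hfS y]
  · infer_instance
end

section
/- Let Y be a compact metric space, ε > 0, and F ⊆ Y an ε-separated set of cardinality n. Let μ be the uniform probability measure on F, and let ν be any probability measure whose support has cardinality m < n. Then W₁(μ, ν) ≥ ((n − m + 1)/n) · (ε/2). -/
open MeasureTheory Filter Metric Set
open scoped NNReal ENNReal

/-!
Test both measures against the `1`-Lipschitz function `f = infDist · S`, where `S` is the finite
set carrying `ν`. Then `∫ f dν = 0`, so `W₁(μ, ν) ≥ ∫ f dμ`, the average distance from the points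
of `F` to `S`. Send each point of `F` to a nearest point of `S`. In a fibre with `c ≥ 2` points the
two closest to their common target are `ε` apart, so the fibre contributes at least `c ε / 2`; and
since `#S < #F`, at most `#S - 1` points lie in singleton fibres.
-/

open Finset

lemma card_add_one_le_card_add_sum_card_large_fibers {α β : Type*} [DecidableEq β]
    {s : Finset α} {t : Finset β} {g : α → β} (hg : ∀ a ∈ s, g a ∈ t) (hlt : #t < #s) :
    #s + 1 ≤ #t + ∑ b ∈ t with 2 ≤ #{a ∈ s | g a = b}, #{a ∈ s | g a = b} := by
  have hsum := card_eq_sum_card_fiberwise hg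
  have h_large : ∃ b ∈ t, 2 ≤ #{a ∈ s | g a = b} := by
    by_contra! h
    have := t.sum_le_card_nsmul (fun b => #{a ∈ s | g a = b}) 1 fun b hb => by
      have := h b hb
      omega
    simp only [smul_eq_mul, mul_one] at this
    omega
  obtain ⟨b, hb, hb2⟩ := h_large
  rw [← sum_filter_add_sum_filter_not t (2 ≤ #{a ∈ s | g a = ·})] at hsum
  set small := t.filter fun b => ¬2 ≤ #{a ∈ s | g a = b}
  have h_small_sum : ∑ b ∈ small, #{a ∈ s | g a = b} ≤ #small := by
    simpa using small.sum_le_card_nsmul (fun b => #{a ∈ s | g a = b}) 1 fun b hb => by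
      have := (mem_filter.mp hb).2
      omega
  have h_small_card : #small < #t := card_lt_card (filter_ssubset.2 ⟨b, hb, not_not.2 hb2⟩)
  omega

section Separated

variable {X : Type*} [MetricSpace X]

lemma card_mul_half_le_sum_dist_of_separated {ε : ℝ} {G : Finset X} (hG : 2 ≤ #G)
    (hsep : ∀ x ∈ G, ∀ y ∈ G, x ≠ y → ε ≤ dist x y) (s : X) :
    #G * (ε / 2) ≤ ∑ x ∈ G, dist x s := by
  classical
  obtain ⟨x₀, hx₀, hmin⟩ := G.exists_min_image (dist · s) (card_pos.mp (by omega))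
  set δ := dist x₀ s
  have h_min : #G * δ ≤ ∑ x ∈ G, dist x s := by
    simpa using G.card_nsmul_le_sum _ δ hmin
  -- every other point is `ε`-far from `x₀`, hence at least `ε - δ` from `s`
  have h_far : ∀ y ∈ G.erase x₀, ε - δ ≤ dist y s := fun y hy => by
    have := hsep y (mem_of_mem_erase hy) x₀ hx₀ (ne_of_mem_erase hy)
    linarith [dist_triangle y s x₀, dist_comm s x₀]
  have h_rest : δ + (#G - 1) * (ε - δ) ≤ ∑ x ∈ G, dist x s := by
    have := (G.erase x₀).card_nsmul_le_sum _ _ h_far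
    rw [card_erase_of_mem hx₀, nsmul_eq_mul, Nat.cast_sub (by omega)] at this
    rw [← sum_erase_add G _ hx₀]
    push_cast at this
    linarith
  have hG' : (2 : ℝ) ≤ #G := by exact_mod_cast hG
  -- `h_min` settles the case `ε / 2 ≤ δ`, `h_rest` the case `δ ≤ ε / 2`
  nlinarith

lemma card_sub_card_add_one_mul_le_sum_infDist {ε : ℝ} (hε : 0 ≤ ε) {F S : Finset X}
    (hsep : ∀ x ∈ F, ∀ y ∈ F, x ≠ y → ε ≤ dist x y) (hS : S.Nonempty) (hlt : #S < #F) :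
    ((#F : ℝ) - #S + 1) * (ε / 2) ≤ ∑ x ∈ F, infDist x (S : Set X) := by
  classical
  choose g hgS hgd using fun x =>
    S.finite_toSet.isCompact.exists_infDist_eq_dist (coe_nonempty.mpr hS) x
  have hg : ∀ x ∈ F, g x ∈ S := fun x _ => hgS x
  let fiber (b : X) := F.filter (g · = b)
  have h_count : ((#F : ℝ) - #S + 1) ≤ ∑ b ∈ S with 2 ≤ #(fiber b), (#(fiber b) : ℝ) := by
    have := card_add_one_le_card_add_sum_card_large_fibers hg hlt
    rw [← Nat.cast_le (α := ℝ)] at this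
    push_cast at this
    linarith
  calc ((#F : ℝ) - #S + 1) * (ε / 2)
      ≤ ∑ b ∈ S with 2 ≤ #(fiber b), #(fiber b) * (ε / 2) := by
        rw [← sum_mul]; gcongr
    _ ≤ ∑ b ∈ S with 2 ≤ #(fiber b), ∑ x ∈ fiber b, dist x b := by
        refine sum_le_sum fun b hb => card_mul_half_le_sum_dist_of_separated (mem_filter.mp hb).2
          (fun x hx y hy => hsep x (mem_of_mem_filter x hx) y (mem_of_mem_filter y hy)) b
    _ ≤ ∑ b ∈ S, ∑ x ∈ fiber b, dist x b :=
        sum_le_sum_of_subset_of_nonneg (filter_subset _ _)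
          fun _ _ _ => sum_nonneg fun _ _ => dist_nonneg
    _ = ∑ x ∈ F, infDist x (S : Set X) := by
        rw [← sum_fiberwise_of_maps_to hg]
        refine sum_congr rfl fun b _ => sum_congr rfl fun x hx => ?_
        rw [hgd x, (mem_filter.mp hx).2]

end Separated

section Wasserstein

variable {Y : Type*} [MeasurableSpace Y]

lemma prod_mem_couplings (μ ν : Measure Y) [IsProbabilityMeasure μ] [IsProbabilityMeasure ν] :
    μ.prod ν ∈ couplings μ ν := by
  constructor <;> simp [Measure.map_fst_prod, Measure.map_snd_prod]

lemma isProbabilityMeasure_of_mem_couplings {μ ν : Measure Y} [IsProbabilityMeasure μ]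
    {π : Measure (Y × Y)} (hπ : π ∈ couplings μ ν) : IsProbabilityMeasure π := by
  have := congrArg (· Set.univ) hπ.1
  simp only [Measure.map_apply measurable_fst MeasurableSet.univ, Set.preimage_univ] at this
  exact ⟨by rw [this, measure_univ]⟩

variable [MetricSpace Y] [CompactSpace Y] [BorelSpace Y]

lemma integral_sub_integral_le_integral_dist {μ ν : Measure Y} [IsProbabilityMeasure μ]
    {f : Y → ℝ} (hf : LipschitzWith 1 f) {π : Measure (Y × Y)} (hπ : π ∈ couplings μ ν) :
    ∫ y, f y ∂μ - ∫ y, f y ∂ν ≤ ∫ z, dist z.1 z.2 ∂π := by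
  have := isProbabilityMeasure_of_mem_couplings hπ
  have integrable {h : Y × Y → ℝ} (hh : Continuous h) : Integrable h π :=
    hh.integrable_of_hasCompactSupport (HasCompactSupport.of_compactSpace h)
  have h₁ : Integrable (fun z => f z.1) π := integrable (hf.continuous.comp continuous_fst)
  have h₂ : Integrable (fun z => f z.2) π := integrable (hf.continuous.comp continuous_snd)
  rw [← hπ.1, ← hπ.2, integral_map measurable_fst.aemeasurable hf.continuous.aestronglyMeasurable,
    integral_map measurable_snd.aemeasurable hf.continuous.aestronglyMeasurable,
    ← integral_sub h₁ h₂]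
  refine integral_mono (h₁.sub h₂) (integrable (continuous_fst.dist continuous_snd)) fun z => ?_
  simpa [Real.dist_eq] using (le_abs_self _).trans (hf.dist_le_mul z.1 z.2)

lemma integral_sub_integral_le_wass_one (μ ν : Measure Y) [IsProbabilityMeasure μ]
    [IsProbabilityMeasure ν] {f : Y → ℝ} (hf : LipschitzWith 1 f) :
    ∫ y, f y ∂μ - ∫ y, f y ∂ν ≤ Wass 1 μ ν := by
  refine le_csInf ⟨_, Set.mem_image_of_mem _ (prod_mem_couplings μ ν)⟩ ?_
  rintro _ ⟨π, hπ, rfl⟩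
  simpa using integral_sub_integral_le_integral_dist hf hπ

end Wasserstein

lemma isProbabilityMeasure_uniformOn_finset {Y : Type*} [MeasurableSpace Y] {F : Finset Y}
    (hF : F.Nonempty) : IsProbabilityMeasure ((#F : ℝ≥0∞)⁻¹ • ∑ x ∈ F, Measure.dirac x) := by
  constructor
  simp [Measure.finsetSum_apply, ENNReal.inv_mul_cancel, hF.ne_empty]

lemma integral_uniformOn_finset {Y : Type*} [MeasurableSpace Y] [MeasurableSingletonClass Y]
    (F : Finset Y) (f : Y → ℝ) :
    ∫ y, f y ∂((#F : ℝ≥0∞)⁻¹ • ∑ x ∈ F, Measure.dirac x) = (#F : ℝ)⁻¹ * ∑ x ∈ F, f x := by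
  rw [integral_smul_measure, integral_finsetSum_measure fun x _ => integrable_dirac enorm_lt_top]
  simp [integral_dirac]

theorem stmt17_general (Y : Type*) [MetricSpace Y] [CompactSpace Y] [MeasurableSpace Y] [BorelSpace Y]
    (ε : ℝ) (hε : 0 < ε) (F : Finset Y) (n : ℕ) (hn : F.card = n)
    (hsep : ∀ x ∈ F, ∀ y ∈ F, x ≠ y → ε ≤ dist x y)
    (ν : Measure Y) [IsProbabilityMeasure ν] (m : ℕ) (hm : m < n)
    (hνsupp : ∃ S : Finset Y, S.card = m ∧ ν (↑S)ᶜ = 0) :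
    ((n - m + 1 : ℝ) / n) * (ε / 2) ≤
      Wass 1 ((n : ℝ≥0∞)⁻¹ • ∑ x ∈ F, Measure.dirac x) ν := by
  obtain ⟨S, rfl, hνS⟩ := hνsupp
  subst hn
  have hS : S.Nonempty := by
    rw [Finset.nonempty_iff_ne_empty]
    rintro rfl
    simp at hνS
  have := isProbabilityMeasure_uniformOn_finset (card_pos.mp (show 0 < #F by omega))
  have hν_zero : ∫ y, infDist y (S : Set Y) ∂ν = 0 := integral_eq_zero_of_ae <|
    measure_mono_null (fun y hy hyS => hy (infDist_zero_of_mem hyS)) hνS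
  calc ((#F - #S + 1 : ℝ) / #F) * (ε / 2)
      = (#F : ℝ)⁻¹ * ((#F - #S + 1) * (ε / 2)) := by ring
    _ ≤ (#F : ℝ)⁻¹ * ∑ x ∈ F, infDist x (S : Set Y) := by
        gcongr
        exact card_sub_card_add_one_mul_le_sum_infDist hε.le hsep hS hm
    _ = _ - ∫ y, infDist y (S : Set Y) ∂ν := by
        rw [integral_uniformOn_finset, hν_zero, sub_zero]
    _ ≤ _ := integral_sub_integral_le_wass_one _ ν (lipschitz_infDist_pt _)

theorem stmt17 (Y : Type*) [MetricSpace Y] [CompactSpace Y] [MeasurableSpace Y] [BorelSpace Y]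
    (ε : ℝ) (hε : 0 < ε) (F : Finset Y) (n : ℕ) (hn : F.card = n) (hn0 : 0 < n)
    (hsep : ∀ x ∈ F, ∀ y ∈ F, x ≠ y → ε ≤ dist x y)
    (ν : Measure Y) [IsProbabilityMeasure ν] (m : ℕ) (hm : m < n)
    (hνsupp : ∃ S : Finset Y, S.card = m ∧ ν (↑S)ᶜ = 0) :
    ((n - m + 1 : ℝ) / n) * (ε / 2) ≤
      Wass 1 ((n : ℝ≥0∞)⁻¹ • ∑ x ∈ F, Measure.dirac x) ν :=
  stmt17_general Y ε hε F n hn hsep ν m hm hνsupp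
end

section
/- Let Y be a Borel subset of a compact metric space Z, equipped with the W₁ metric on probability measures. Then there exists a Borel probability measure μ on Z giving full mass to Y whose lower quantization order equals the lower metric order of Y and whose upper quantization order equals the upper metric order of Y. -/
open MeasureTheory Filter Metric Set
open scoped NNReal ENNReal

/-- Packing number of a subset `Y` of `Z`. -/
noncomputable def relPackNum {Z : Type*} [MetricSpace Z] (Y : Set Z) (ε : ℝ) : ℕ :=
  sSup {n | ∃ F : Finset Z, ↑F ⊆ Y ∧ F.card = n ∧ ∀ x ∈ F, ∀ y ∈ F, x ≠ y → ε < dist x y}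

noncomputable section Aux

variable {Z : Type*} [MetricSpace Z]

/-- pick the first element of `l` within distance `r` of `x`, else `d`. -/
def pickFn (l : List Z) (d : Z) (r : ℝ) (x : Z) : Z :=
  l.foldr (fun g acc => if dist x g ≤ r then g else acc) d

lemma pickFn_mem {l : List Z} {d : Z} {r : ℝ} {x : Z} {G : Set Z}
    (hl : ∀ g ∈ l, g ∈ G) (hd : d ∈ G) : pickFn l d r x ∈ G := by
  induction l with
  | nil => exact hd
  | cons g t ih =>
      simp only [pickFn, List.foldr_cons]
      split
      · exact hl g List.mem_cons_self
      · exact ih fun g' hg' => hl g' (List.mem_cons_of_mem _ hg')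

lemma pickFn_dist {l : List Z} {d : Z} {r : ℝ} {x : Z}
    (h : ∃ g ∈ l, dist x g ≤ r) : dist x (pickFn l d r x) ≤ r := by
  induction l with
  | nil => simp at h
  | cons g t ih =>
      simp only [pickFn, List.foldr_cons]
      by_cases hg : dist x g ≤ r
      · simpa [hg]
      · rw [if_neg hg]
        apply ih
        rcases h with ⟨g', hg', hd'⟩
        rcases List.mem_cons.mp hg' with rfl | hmem
        · exact absurd hd' hg
        · exact ⟨g', hmem, hd'⟩

lemma pickFn_measurable [MeasurableSpace Z] [BorelSpace Z] (l : List Z) (d : Z) (r : ℝ) :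
    Measurable (pickFn l d r) := by
  induction l with
  | nil => exact measurable_const
  | cons g t ih =>
      have hs : MeasurableSet {x : Z | dist x g ≤ r} :=
        (isClosed_le (continuous_id.dist continuous_const) continuous_const).measurableSet
      haveI : DecidablePred fun a : Z => dist a g ≤ r := fun a => Real.decidableLE _ _
      have hrw : pickFn (g :: t) d r
          = fun x => if dist x g ≤ r then g else pickFn t d r x := by
        funext x
        simp [pickFn]
      rw [hrw]
      exact Measurable.ite hs measurable_const ih

/-- Pigeonhole: an `r`-separated finite set injects into any `r/2`-net. -/
lemma sep_card_le_of_net {F T : Finset Z} {r : ℝ} (hr : 0 < r)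
    (hsep : ∀ x ∈ F, ∀ y ∈ F, x ≠ y → r < dist x y)
    (hnet : ∀ x ∈ F, ∃ t ∈ T, dist x t ≤ r / 2) : F.card ≤ T.card := by
  rcases T.eq_empty_or_nonempty with rfl | ⟨t0, ht0⟩
  · rcases F.eq_empty_or_nonempty with rfl | ⟨x, hx⟩
    · simp
    · rcases hnet x hx with ⟨t, ht, -⟩; exact absurd ht (Finset.notMem_empty t)
  · apply Finset.card_le_card_of_injOn (fun x => pickFn T.toList t0 (r/2) x)
    · intro x hx
      exact pickFn_mem (G := (T : Set Z)) (fun g hg => (Finset.mem_toList).mp hg) ht0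
    · intro x hx y hy hxy
      by_contra hne
      have hxy' : pickFn T.toList t0 (r/2) x = pickFn T.toList t0 (r/2) y := hxy
      have hdx : dist x (pickFn T.toList t0 (r/2) x) ≤ r/2 := by
        apply pickFn_dist
        rcases hnet x (Finset.mem_coe.mp hx) with ⟨t, ht, hd⟩
        exact ⟨t, (Finset.mem_toList).mpr ht, hd⟩
      have hdy : dist y (pickFn T.toList t0 (r/2) y) ≤ r/2 := by
        apply pickFn_dist
        rcases hnet y (Finset.mem_coe.mp hy) with ⟨t, ht, hd⟩
        exact ⟨t, (Finset.mem_toList).mpr ht, hd⟩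
      rw [hxy'] at hdx
      have hle : dist x y ≤ r := by
        calc dist x y ≤ dist x (pickFn T.toList t0 (r/2) y) + dist (pickFn T.toList t0 (r/2) y) y :=
              dist_triangle _ _ _
          _ = dist x (pickFn T.toList t0 (r/2) y) + dist y (pickFn T.toList t0 (r/2) y) := by
              congr 1; exact dist_comm _ _
          _ ≤ r/2 + r/2 := add_le_add hdx hdy
          _ = r := by ring
      linarith [hsep x (Finset.mem_coe.mp hx) y (Finset.mem_coe.mp hy) hne]

variable [CompactSpace Z]

/-- the set of cardinalities of `r`-separated subsets of `Y` is bounded. -/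
lemma sep_bddAbove (Y : Set Z) {r : ℝ} (hr : 0 < r) :
    BddAbove {n | ∃ F : Finset Z, ↑F ⊆ Y ∧ F.card = n ∧
      ∀ x ∈ F, ∀ y ∈ F, x ≠ y → r < dist x y} := by
  classical
  have htb : TotallyBounded (Set.univ : Set Z) := isCompact_univ.totallyBounded
  rcases totallyBounded_iff_subset.mp htb _ (Metric.dist_mem_uniformity (half_pos hr))
    with ⟨t, -, htfin, hcov⟩
  refine ⟨(htfin.toFinset).card, ?_⟩
  rintro n ⟨F, hFY, rfl, hsep⟩
  apply sep_card_le_of_net hr hsep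
  intro x hx
  have := hcov (Set.mem_univ x)
  simp only [Set.mem_iUnion] at this
  rcases this with ⟨y, hy, hxy⟩
  exact ⟨y, htfin.mem_toFinset.mpr hy, le_of_lt hxy⟩

lemma sep_card_le_relPackNum {Y : Set Z} {r : ℝ} (hr : 0 < r) {F : Finset Z}
    (hFY : ↑F ⊆ Y) (hsep : ∀ x ∈ F, ∀ y ∈ F, x ≠ y → r < dist x y) :
    F.card ≤ relPackNum Y r :=
  le_csSup (sep_bddAbove Y hr) ⟨F, hFY, rfl, hsep⟩

lemma one_le_relPackNum {Y : Set Z} (hYne : Y.Nonempty) (r : ℝ) (hr : 0 < r) :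
    1 ≤ relPackNum Y r := by
  rcases hYne with ⟨y, hy⟩
  have h : ({y} : Finset Z).card ≤ relPackNum Y r :=
    sep_card_le_relPackNum hr (by simpa) (by simp)
  simpa using h

lemma relPackNum_anti {Y : Set Z} {r r' : ℝ} (hr : 0 < r) (hrr' : r ≤ r') :
    relPackNum Y r' ≤ relPackNum Y r := by
  apply csSup_le_csSup (sep_bddAbove Y hr)
  · exact ⟨0, ⟨∅, by simp⟩⟩
  · rintro n ⟨F, hFY, rfl, hsep⟩
    exact ⟨F, hFY, rfl, fun x hx y hy hxy => lt_of_le_of_lt hrr' (hsep x hx y hy hxy)⟩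

lemma exists_max_sep {Y : Set Z} (hYne : Y.Nonempty) {r : ℝ} (hr : 0 < r) :
    ∃ F : Finset Z, ↑F ⊆ Y ∧ (∀ x ∈ F, ∀ y ∈ F, x ≠ y → r < dist x y) ∧
      F.card = relPackNum Y r ∧ (∀ y ∈ Y, ∃ x ∈ F, dist y x ≤ r) ∧ F.Nonempty := by
  classical
  have hbdd := sep_bddAbove (Y := Y) hr
  have hne : {n | ∃ F : Finset Z, ↑F ⊆ Y ∧ F.card = n ∧
      ∀ x ∈ F, ∀ y ∈ F, x ≠ y → r < dist x y}.Nonempty := ⟨0, ⟨∅, by simp⟩⟩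
  have hmem := Nat.sSup_mem hne hbdd
  rcases hmem with ⟨F, hFY, hcard, hsep⟩
  refine ⟨F, hFY, hsep, hcard, ?_, ?_⟩
  · intro y hy
    by_contra hcon
    push_neg at hcon
    have hyF : y ∉ F := fun h => by have := hcon y h; rw [dist_self] at this; linarith
    have hsep' : ∀ x ∈ insert y F, ∀ x' ∈ insert y F, x ≠ x' → r < dist x x' := by
      intro x hx x' hx' hne'
      rcases Finset.mem_insert.mp hx with rfl | hx2 <;>
        rcases Finset.mem_insert.mp hx' with rfl | hx'2
      · exact absurd rfl hne'
      · exact hcon x' hx'2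
      · rw [dist_comm]; exact hcon x hx2
      · exact hsep x hx2 x' hx'2 hne'
    have hcard' : (insert y F).card ≤ relPackNum Y r := by
      apply sep_card_le_relPackNum hr _ hsep'
      intro z hz
      rcases Finset.mem_insert.mp (Finset.mem_coe.mp hz) with rfl | hz'
      · exact hy
      · exact hFY hz'
    rw [Finset.card_insert_of_notMem hyF, hcard] at hcard'
    unfold relPackNum at hcard'
    omega
  · rw [← Finset.card_pos, hcard]
    exact one_le_relPackNum hYne r hr

end Aux
noncomputable section MeasureConstruction
open scoped Classical

variable {Z : Type*} [MetricSpace Z] [MeasurableSpace Z] [BorelSpace Z]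

/-- uniform probability measure on a finite set -/
def unifOn (F : Finset Z) : Measure Z := (F.card : ℝ≥0∞)⁻¹ • ∑ x ∈ F, Measure.dirac x

lemma unifOn_apply (F : Finset Z) {A : Set Z} (hA : MeasurableSet A) :
    unifOn F A = (F.card : ℝ≥0∞)⁻¹ * (F.filter (fun x => x ∈ A)).card := by
  simp only [unifOn, Measure.smul_apply, smul_eq_mul, Measure.finset_sum_apply]
  congr 1
  rw [Finset.card_filter]
  push_cast
  refine Finset.sum_congr rfl fun x hx => ?_
  rw [Measure.dirac_apply' x hA]
  by_cases h : x ∈ A <;> simp [h]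

lemma unifOn_apply_eq_one {F : Finset Z} (hne : F.Nonempty) {A : Set Z}
    (hA : MeasurableSet A) (hFA : ∀ x ∈ F, x ∈ A) : unifOn F A = 1 := by
  rw [unifOn_apply F hA, Finset.filter_true_of_mem hFA,
    ENNReal.inv_mul_cancel (by exact_mod_cast Finset.card_ne_zero_of_mem hne.choose_spec)
      (by simp)]

lemma unifOn_prob {F : Finset Z} (hne : F.Nonempty) : IsProbabilityMeasure (unifOn F) :=
  ⟨unifOn_apply_eq_one hne MeasurableSet.univ (fun _ _ => trivial)⟩

lemma unifOn_apply_ge {F B : Finset Z} (hBF : B ⊆ F) :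
    (F.card : ℝ≥0∞)⁻¹ * B.card ≤ unifOn F (↑B) := by
  rw [unifOn_apply F (B.finite_toSet.measurableSet)]
  gcongr
  intro x hx
  simp only [Finset.mem_filter, Finset.mem_coe]
  exact ⟨hBF hx, hx⟩

/-- the layered measure -/
def mkMu (F : ℕ → Finset Z) : Measure Z :=
  Measure.sum fun i => ((2 : ℝ≥0∞) ^ (i + 1))⁻¹ • unifOn (F i)

lemma tsum_two_pow_inv : ∑' i : ℕ, ((2 : ℝ≥0∞) ^ (i + 1))⁻¹ = 1 := by
  have h : ∀ i : ℕ, ((2 : ℝ≥0∞) ^ (i + 1))⁻¹ = 2⁻¹ * (2⁻¹ : ℝ≥0∞) ^ i := by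
    intro i
    rw [pow_succ, ENNReal.mul_inv (Or.inr (by simp)) (Or.inr (by simp)), mul_comm,
      ← ENNReal.inv_pow]
  simp only [h]
  rw [ENNReal.tsum_mul_left, ENNReal.tsum_geometric]
  have : (1 : ℝ≥0∞) - 2⁻¹ = 2⁻¹ := by
    rw [ENNReal.sub_eq_of_eq_add (by simp)]
    rw [ENNReal.inv_two_add_inv_two]
  rw [this, inv_inv, ENNReal.inv_mul_cancel (by simp) (by simp)]

lemma mkMu_apply (F : ℕ → Finset Z) {A : Set Z} (hA : MeasurableSet A) :
    mkMu F A = ∑' i : ℕ, ((2 : ℝ≥0∞) ^ (i + 1))⁻¹ * unifOn (F i) A := by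
  rw [mkMu, Measure.sum_apply _ hA]
  rfl

lemma mkMu_apply_eq_one (F : ℕ → Finset Z) (hne : ∀ i, (F i).Nonempty) {A : Set Z}
    (hA : MeasurableSet A) (hFA : ∀ i, ∀ x ∈ F i, x ∈ A) : mkMu F A = 1 := by
  rw [mkMu_apply F hA]
  calc ∑' i : ℕ, ((2 : ℝ≥0∞) ^ (i + 1))⁻¹ * unifOn (F i) A
      = ∑' i : ℕ, ((2 : ℝ≥0∞) ^ (i + 1))⁻¹ := by
        refine tsum_congr fun i => ?_
        rw [unifOn_apply_eq_one (hne i) hA (hFA i), mul_one]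
    _ = 1 := tsum_two_pow_inv

lemma mkMu_prob (F : ℕ → Finset Z) (hne : ∀ i, (F i).Nonempty) :
    IsProbabilityMeasure (mkMu F) :=
  ⟨mkMu_apply_eq_one F hne MeasurableSet.univ (fun _ _ _ => trivial)⟩

lemma mkMu_level_le (F : ℕ → Finset Z) {A : Set Z} (hA : MeasurableSet A) (i : ℕ) :
    ((2 : ℝ≥0∞) ^ (i + 1))⁻¹ * unifOn (F i) A ≤ mkMu F A := by
  rw [mkMu_apply F hA]
  exact ENNReal.le_tsum i

end MeasureConstruction
noncomputable section Wasserstein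

open scoped Classical

variable {Z : Type*} [MetricSpace Z] [CompactSpace Z] [MeasurableSpace Z] [BorelSpace Z]

lemma dist_bound (Z : Type*) [MetricSpace Z] [CompactSpace Z] :
    ∃ C : ℝ, 0 ≤ C ∧ ∀ x y : Z, dist x y ≤ C := by
  rcases Metric.isBounded_iff.mp (isCompact_univ (X := Z)).isBounded with ⟨C, hC⟩
  exact ⟨max C 0, le_max_right _ _,
    fun x y => le_trans (hC trivial trivial) (le_max_left _ _)⟩

lemma wass_bddBelow (μ ν : Measure Z) (p : ℝ) :
    BddBelow ((fun π : Measure (Z × Z) =>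
      (∫ z, dist z.1 z.2 ^ p ∂π) ^ (1 / p)) '' couplings μ ν) := by
  refine ⟨0, ?_⟩
  rintro v ⟨π, -, rfl⟩
  exact Real.rpow_nonneg
    (integral_nonneg fun z => Real.rpow_nonneg dist_nonneg _) _

lemma couplings_nonempty (μ ν : Measure Z) [IsProbabilityMeasure μ]
    [IsProbabilityMeasure ν] : (μ.prod ν) ∈ couplings μ ν := by
  constructor
  · rw [Measure.map_fst_prod, measure_univ, one_smul]
  · rw [Measure.map_snd_prod, measure_univ, one_smul]

lemma coupling_prob {μ ν : Measure Z} [IsProbabilityMeasure μ]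
    {π : Measure (Z × Z)} (hπ : π ∈ couplings μ ν) : IsProbabilityMeasure π := by
  constructor
  have h : π.map Prod.fst Set.univ = π Set.univ := by
    rw [Measure.map_apply measurable_fst MeasurableSet.univ, Set.preimage_univ]
  rw [← h, hπ.1, measure_univ]

lemma integrable_dist_coupling (π : Measure (Z × Z)) [IsProbabilityMeasure π] :
    Integrable (fun z : Z × Z => dist z.1 z.2) π := by
  rcases dist_bound Z with ⟨C, hC0, hC⟩
  refine Integrable.mono' (integrable_const C)
    ((measurable_fst.dist measurable_snd).aestronglyMeasurable) ?_
  filter_upwards with z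
  rw [Real.norm_eq_abs, abs_of_nonneg dist_nonneg]
  exact hC _ _

/-- The quantization set of `μ` at scale `ε` contains `relPackNum Y (ε/2)`. -/
lemma quant_mem_upper {Y : Set Z} (hY : MeasurableSet Y) (hYne : Y.Nonempty)
    (μ : Measure Z) [IsProbabilityMeasure μ] (hμY : μ Y = 1) {ε : ℝ} (hε : 0 < ε) :
    relPackNum Y (ε/2) ∈ {n | ∃ ν : Measure Z, IsProbabilityMeasure ν ∧
      (∃ S : Finset Z, S.card = n ∧ ν (↑S)ᶜ = 0) ∧ Wass 1 μ ν ≤ ε} := by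
  obtain ⟨G, hGY, hGsep, hGcard, hGnet, hGne⟩ := exists_max_sep hYne (half_pos hε)
  obtain ⟨g0, hg0⟩ := hGne
  set pf : Z → Z := pickFn G.toList g0 (ε/2) with hpf_def
  have hpfm : Measurable pf := pickFn_measurable _ _ _
  have hpf_mem : ∀ x, pf x ∈ (G : Set Z) := fun x =>
    pickFn_mem (fun g hg => Finset.mem_toList.mp hg) hg0
  have hpfY : ∀ x ∈ Y, dist x (pf x) ≤ ε/2 := by
    intro x hx
    apply pickFn_dist
    rcases hGnet x hx with ⟨t, ht, hd⟩
    exact ⟨t, Finset.mem_toList.mpr ht, hd⟩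
  set ν : Measure Z := μ.map pf with hν_def
  haveI hνp : IsProbabilityMeasure ν := Measure.isProbabilityMeasure_map hpfm.aemeasurable
  have hνS : ν (↑G)ᶜ = 0 := by
    rw [hν_def, Measure.map_apply hpfm (G.finite_toSet.measurableSet.compl)]
    have : pf ⁻¹' (↑G)ᶜ = ∅ := by
      ext x
      simp only [Set.mem_preimage, Set.mem_compl_iff, Set.mem_empty_iff_false, iff_false,
        not_not]
      exact hpf_mem x
    rw [this, measure_empty]
  set e : Z → Z × Z := fun x => (x, pf x) with he_def
  have hem : Measurable e := measurable_id.prodMk hpfm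
  set π : Measure (Z × Z) := μ.map e with hπ_def
  have hπc : π ∈ couplings μ ν := by
    constructor
    · rw [hπ_def, Measure.map_map measurable_fst hem]
      simp [Function.comp_def]
      exact Measure.map_id
    · rw [hπ_def, Measure.map_map measurable_snd hem]
      rfl
  have hμYc : μ Yᶜ = 0 := by
    rw [measure_compl hY (measure_ne_top μ Y), hμY, measure_univ, tsub_self]
  have haeY : ∀ᵐ x ∂μ, x ∈ Y := by
    rw [ae_iff]
    exact hμYc
  haveI : IsProbabilityMeasure π := coupling_prob hπc
  have hint : ∫ z, dist z.1 z.2 ∂π = ∫ x, dist x (pf x) ∂μ := by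
    rw [hπ_def, integral_map hem.aemeasurable
      ((measurable_fst.dist measurable_snd).aestronglyMeasurable)]
  have hintle : ∫ x, dist x (pf x) ∂μ ≤ ε/2 := by
    have hi1 : Integrable (fun x => dist x (pf x)) μ := by
      rcases dist_bound Z with ⟨C, hC0, hC⟩
      refine Integrable.mono' (integrable_const C)
        ((measurable_id.dist hpfm).aestronglyMeasurable) ?_
      filter_upwards with x
      rw [Real.norm_eq_abs, abs_of_nonneg dist_nonneg]
      exact hC _ _
    calc ∫ x, dist x (pf x) ∂μ ≤ ∫ _x, ε/2 ∂μ := by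
          refine integral_mono_ae hi1 (integrable_const _) ?_
          filter_upwards [haeY] with x hx
          exact hpfY x hx
      _ = ε/2 := by simp
  have hWle : Wass 1 μ ν ≤ ε := by
    have hmem : (∫ z, dist z.1 z.2 ^ (1:ℝ) ∂π) ^ (1/(1:ℝ)) ∈
        ((fun π : Measure (Z × Z) => (∫ z, dist z.1 z.2 ^ (1:ℝ) ∂π) ^ (1/(1:ℝ)))
          '' couplings μ ν) := ⟨π, hπc, rfl⟩
    have h1 : Wass 1 μ ν ≤ (∫ z, dist z.1 z.2 ^ (1:ℝ) ∂π) ^ (1/(1:ℝ)) :=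
      csInf_le (wass_bddBelow μ ν 1) hmem
    calc Wass 1 μ ν ≤ (∫ z, dist z.1 z.2 ^ (1:ℝ) ∂π) ^ (1/(1:ℝ)) := h1
      _ = ∫ z, dist z.1 z.2 ∂π := by
          simp [Real.rpow_one]
      _ = ∫ x, dist x (pf x) ∂μ := hint
      _ ≤ ε/2 := hintle
      _ ≤ ε := by linarith
  exact ⟨ν, hνp, ⟨G, hGcard, hνS⟩, hWle⟩

lemma quantW_le_relPackNum {Y : Set Z} (hY : MeasurableSet Y) (hYne : Y.Nonempty)
    (μ : Measure Z) [IsProbabilityMeasure μ] (hμY : μ Y = 1) {ε : ℝ} (hε : 0 < ε) :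
    quantW 1 μ ε ≤ relPackNum Y (ε/2) :=
  Nat.sInf_le (quant_mem_upper hY hYne μ hμY hε)

lemma one_le_quantW {Y : Set Z} (hY : MeasurableSet Y) (hYne : Y.Nonempty)
    (μ : Measure Z) [IsProbabilityMeasure μ] (hμY : μ Y = 1) {ε : ℝ} (hε : 0 < ε) :
    1 ≤ quantW 1 μ ε := by
  have hne : {n | ∃ ν : Measure Z, IsProbabilityMeasure ν ∧
      (∃ S : Finset Z, S.card = n ∧ ν (↑S)ᶜ = 0) ∧ Wass 1 μ ν ≤ ε}.Nonempty :=
    ⟨_, quant_mem_upper hY hYne μ hμY hε⟩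
  by_contra h
  push_neg at h
  have h0 : quantW 1 μ ε = 0 := by omega
  have h0' : sInf {n | ∃ ν : Measure Z, IsProbabilityMeasure ν ∧
      (∃ S : Finset Z, S.card = n ∧ ν (↑S)ᶜ = 0) ∧ Wass 1 μ ν ≤ ε} = 0 := h0
  have hmem0 : (0:ℕ) ∈ {n | ∃ ν : Measure Z, IsProbabilityMeasure ν ∧
      (∃ S : Finset Z, S.card = n ∧ ν (↑S)ᶜ = 0) ∧ Wass 1 μ ν ≤ ε} := by
    rcases Nat.sInf_eq_zero.mp h0' with h1 | h2
    · exact h1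
    · rw [h2] at hne
      exact absurd hne (by simp)
  rcases hmem0 with ⟨ν, hνp, ⟨S, hScard, hSsupp⟩, -⟩
  have hS0 : S = ∅ := Finset.card_eq_zero.mp hScard
  rw [hS0, show ((↑(∅:Finset Z))ᶜ : Set Z) = Set.univ by simp] at hSsupp
  rw [measure_univ] at hSsupp
  exact one_ne_zero hSsupp

end Wasserstein
noncomputable section LowerBound

open scoped Classical

variable {Z : Type*} [MetricSpace Z] [CompactSpace Z] [MeasurableSpace Z] [BorelSpace Z]

/-- Key transport lower bound. -/
lemma level_lower {F : Finset Z} {δ : ℝ} (hδ : 0 < δ)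
    (hsep : ∀ x ∈ F, ∀ y ∈ F, x ≠ y → 4*δ < dist x y)
    (μ : Measure Z) [IsProbabilityMeasure μ] {w : ℝ≥0∞} (hw : w ≠ ⊤)
    (hlev : ∀ B : Finset Z, B ⊆ F → w * B.card ≤ μ ↑B)
    {ν : Measure Z} [IsProbabilityMeasure ν] {S : Finset Z} (hS : ν (↑S)ᶜ = 0) :
    2*δ * (w.toReal * ((F.card : ℝ) - S.card)) ≤ Wass 1 μ ν := by
  set Bfar : Finset Z := F.filter (fun x => ∀ s ∈ S, 2*δ < dist x s) with hBfar_def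
  have hBsub : Bfar ⊆ F := Finset.filter_subset _ _
  have hBcard : (F.card : ℝ) - S.card ≤ Bfar.card := by
    have hnear : (F.filter (fun x => ¬ ∀ s ∈ S, 2*δ < dist x s)).card ≤ S.card := by
      apply sep_card_le_of_net (r := 4*δ) (by linarith)
      · intro x hx y hy hxy
        exact hsep x (Finset.mem_filter.mp hx).1 y (Finset.mem_filter.mp hy).1 hxy
      · intro x hx
        have h := (Finset.mem_filter.mp hx).2
        push_neg at h
        rcases h with ⟨s, hs, hds⟩
        exact ⟨s, hs, by linarith⟩
    have h1 : Bfar.card + (F.filter (fun x => ¬ ∀ s ∈ S, 2*δ < dist x s)).card = F.card :=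
      Finset.card_filter_add_card_filter_not _
    have h2 : (Bfar.card : ℝ) + (F.filter (fun x => ¬ ∀ s ∈ S, 2*δ < dist x s)).card
        = F.card := by exact_mod_cast h1
    have h3 : ((F.filter (fun x => ¬ ∀ s ∈ S, 2*δ < dist x s)).card : ℝ) ≤ S.card := by
      exact_mod_cast hnear
    linarith
  have key : ∀ π ∈ couplings μ ν,
      2*δ * (w.toReal * ((F.card : ℝ) - S.card)) ≤ ∫ z, dist z.1 z.2 ∂π := by
    intro π hπ
    haveI : IsProbabilityMeasure π := coupling_prob hπ
    set E : Set (Z × Z) := ↑Bfar ×ˢ ↑S with hE_def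
    have hEm : MeasurableSet E :=
      (Bfar.finite_toSet.measurableSet).prod (S.finite_toSet.measurableSet)
    have hπfst : π (Prod.fst ⁻¹' ↑Bfar) = μ ↑Bfar := by
      rw [← Measure.map_apply measurable_fst Bfar.finite_toSet.measurableSet, hπ.1]
    have hπsnd : π (Prod.snd ⁻¹' (↑S)ᶜ) = 0 := by
      have h := hπ.2
      have h2 : π.map Prod.snd ((↑S)ᶜ) = ν ((↑S)ᶜ) := by rw [h]
      rw [Measure.map_apply measurable_snd S.finite_toSet.measurableSet.compl] at h2
      rw [h2, hS]
    have hsub : Prod.fst ⁻¹' (↑Bfar : Set Z) ⊆ E ∪ Prod.snd ⁻¹' (↑S)ᶜ := by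
      rintro ⟨a, b⟩ ha
      by_cases hb : b ∈ (↑S : Set Z)
      · exact Or.inl ⟨ha, hb⟩
      · exact Or.inr hb
    have hEge : μ ↑Bfar ≤ π E := by
      calc μ ↑Bfar = π (Prod.fst ⁻¹' ↑Bfar) := hπfst.symm
        _ ≤ π (E ∪ Prod.snd ⁻¹' (↑S)ᶜ) := measure_mono hsub
        _ ≤ π E + π (Prod.snd ⁻¹' (↑S)ᶜ) := measure_union_le _ _
        _ = π E := by rw [hπsnd, add_zero]
    have hint : 2*δ * (π E).toReal ≤ ∫ z, dist z.1 z.2 ∂π := by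
      have hind : ∫ z, E.indicator (fun _ => 2*δ) z ∂π = 2*δ * (π E).toReal := by
        rw [integral_indicator_const _ hEm]
        simp [mul_comm]
        exact Or.inl rfl
      rw [← hind]
      refine integral_mono_ae ((integrable_const (2*δ)).indicator hEm)
        (integrable_dist_coupling π) ?_
      filter_upwards with z
      by_cases hz : z ∈ E
      · rw [Set.indicator_of_mem hz]
        rcases hz with ⟨hz1, hz2⟩
        have h := (Finset.mem_filter.mp (Finset.mem_coe.mp hz1)).2 z.2 (Finset.mem_coe.mp hz2)
        linarith
      · rw [Set.indicator_of_notMem hz]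
        exact dist_nonneg
    have hμB : w * Bfar.card ≤ μ ↑Bfar := hlev Bfar hBsub
    have h2 : (w * (Bfar.card : ℝ≥0∞)).toReal ≤ (π E).toReal :=
      ENNReal.toReal_mono (measure_ne_top π E) (le_trans hμB hEge)
    have h3 : w.toReal * (Bfar.card : ℝ) ≤ (π E).toReal := by
      rwa [ENNReal.toReal_mul, ENNReal.toReal_natCast] at h2
    have hw0 : 0 ≤ w.toReal := ENNReal.toReal_nonneg
    calc 2*δ * (w.toReal * ((F.card : ℝ) - S.card)) ≤ 2*δ * (w.toReal * Bfar.card) := by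
          apply mul_le_mul_of_nonneg_left _ (by linarith)
          exact mul_le_mul_of_nonneg_left hBcard hw0
      _ ≤ 2*δ * (π E).toReal := by
          apply mul_le_mul_of_nonneg_left h3 (by linarith)
      _ ≤ ∫ z, dist z.1 z.2 ∂π := hint
  apply le_csInf
  · exact ⟨_, ⟨μ.prod ν, couplings_nonempty μ ν, rfl⟩⟩
  · rintro v ⟨π, hπ, rfl⟩
    have h := key π hπ
    calc 2*δ * (w.toReal * ((F.card : ℝ) - S.card)) ≤ ∫ z, dist z.1 z.2 ∂π := h
      _ = (∫ z, dist z.1 z.2 ^ (1:ℝ) ∂π) ^ (1/(1:ℝ)) := by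
          simp [Real.rpow_one]

end LowerBound
noncomputable section Scales

/-- scale of level `i` : `η i = 4 · 2^{-i²}` -/
def eta (i : ℕ) : ℝ := 4 * ((2:ℝ)^(i^2))⁻¹

/-- `δ i = 2^{-i²}` -/
def dlt (i : ℕ) : ℝ := ((2:ℝ)^(i^2))⁻¹

/-- `ε i = 2^{-(i²+i+1)}` -/
def epsl (i : ℕ) : ℝ := ((2:ℝ)^(i^2+i+1))⁻¹

lemma dlt_pos (i : ℕ) : 0 < dlt i := by unfold dlt; positivity
lemma eta_pos (i : ℕ) : 0 < eta i := by unfold eta; positivity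
lemma epsl_pos (i : ℕ) : 0 < epsl i := by unfold epsl; positivity
lemma eta_eq (i : ℕ) : eta i = 4 * dlt i := rfl

lemma epsl_eq (i : ℕ) : epsl i = dlt i * ((2:ℝ)^(i+1))⁻¹ := by
  rw [epsl, dlt, ← mul_inv, ← pow_add]
  exact congrArg (fun n => ((2:ℝ)^n)⁻¹) (by omega : i^2+i+1 = i^2+(i+1))

lemma log_two_pos : 0 < Real.log 2 := Real.log_pos (by norm_num)

lemma neg_log_eta (i : ℕ) : -Real.log (eta i) = ((i:ℝ)^2 - 2) * Real.log 2 := by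
  rw [eta, Real.log_mul (by norm_num) (by positivity), Real.log_inv, Real.log_pow,
    show (4:ℝ) = 2^2 by norm_num, Real.log_pow]
  push_cast
  ring

lemma neg_log_epsl (i : ℕ) : -Real.log (epsl i) = ((i:ℝ)^2 + i + 1) * Real.log 2 := by
  rw [epsl, Real.log_inv, Real.log_pow]
  push_cast
  ring

lemma eta_anti : ∀ {i j : ℕ}, i ≤ j → eta j ≤ eta i := by
  intro i j hij
  unfold eta
  have h : (2:ℝ)^(i^2) ≤ 2^(j^2) :=
    pow_le_pow_right₀ (by norm_num) (Nat.pow_le_pow_left hij 2)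
  have h2 : ((2:ℝ)^(j^2))⁻¹ ≤ ((2:ℝ)^(i^2))⁻¹ := inv_anti₀ (by positivity) h
  linarith

lemma epsl_anti : ∀ {i j : ℕ}, i ≤ j → epsl j ≤ epsl i := by
  intro i j hij
  unfold epsl
  have he : i^2 + i + 1 ≤ j^2 + j + 1 := by
    have := Nat.pow_le_pow_left hij 2
    omega
  have h : (2:ℝ)^(i^2+i+1) ≤ 2^(j^2+j+1) := pow_le_pow_right₀ (by norm_num) he
  exact inv_anti₀ (by positivity) h

lemma eta_tendsto : Filter.Tendsto eta Filter.atTop (nhds 0) := by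
  have h : Filter.Tendsto (fun n : ℕ => ((2:ℝ)^n)⁻¹) Filter.atTop (nhds 0) :=
    tendsto_inv_atTop_zero.comp (tendsto_pow_atTop_atTop_of_one_lt (by norm_num))
  have h2 : Filter.Tendsto (fun i : ℕ => i^2) Filter.atTop Filter.atTop :=
    Filter.tendsto_atTop_mono (fun i => Nat.le_self_pow (by norm_num) i) Filter.tendsto_id
  have h3 := (h.comp h2).const_mul (4:ℝ)
  rw [mul_zero] at h3
  exact h3

lemma epsl_tendsto : Filter.Tendsto epsl Filter.atTop (nhds 0) := by
  have h : Filter.Tendsto (fun n : ℕ => ((2:ℝ)^n)⁻¹) Filter.atTop (nhds 0) :=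
    tendsto_inv_atTop_zero.comp (tendsto_pow_atTop_atTop_of_one_lt (by norm_num))
  have h2 : Filter.Tendsto (fun i : ℕ => i^2+i+1) Filter.atTop Filter.atTop :=
    Filter.tendsto_atTop_mono
      (fun i => (Nat.le_add_left i (i^2)).trans (Nat.le_succ _)) Filter.tendsto_id
  exact h.comp h2

end Scales

noncomputable section QuantLower

open scoped Classical

variable {Z : Type*} [MetricSpace Z] [CompactSpace Z] [MeasurableSpace Z] [BorelSpace Z]
variable {Y : Set Z}

/-- the specialized lower bound for the layered measure -/
lemma quant_lower (hY : MeasurableSet Y) (hYne : Y.Nonempty)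
    (F : ℕ → Finset Z)
    (hFY : ∀ i, ↑(F i) ⊆ Y)
    (hFsep : ∀ i, ∀ x ∈ F i, ∀ y ∈ F i, x ≠ y → eta i < dist x y)
    (hFcard : ∀ i, (F i).card = relPackNum Y (eta i))
    (hFne : ∀ i, (F i).Nonempty)
    (hμY : mkMu F Y = 1)
    (i : ℕ) {ε : ℝ} (hε : 0 < ε) (hεi : ε ≤ epsl i) :
    (relPackNum Y (eta i) : ℝ) ≤ 2 * quantW 1 (mkMu F) ε := by
  haveI : IsProbabilityMeasure (mkMu F) := mkMu_prob F hFne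
  set N : ℕ := (F i).card with hN_def
  have hN_pos : 0 < N := Finset.card_pos.mpr (hFne i)
  -- get the optimal quantizer
  have hne : {n | ∃ ν : Measure Z, IsProbabilityMeasure ν ∧
      (∃ S : Finset Z, S.card = n ∧ ν (↑S)ᶜ = 0) ∧ Wass 1 (mkMu F) ν ≤ ε}.Nonempty :=
    ⟨_, quant_mem_upper hY hYne (mkMu F) hμY hε⟩
  have hmem : quantW 1 (mkMu F) ε ∈ {n | ∃ ν : Measure Z, IsProbabilityMeasure ν ∧
      (∃ S : Finset Z, S.card = n ∧ ν (↑S)ᶜ = 0) ∧ Wass 1 (mkMu F) ν ≤ ε} :=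
    Nat.sInf_mem hne
  rcases hmem with ⟨ν, hνp, ⟨S, hScard, hSsupp⟩, hW⟩
  haveI := hνp
  -- apply the transport bound
  set w : ℝ≥0∞ := ((2:ℝ≥0∞)^(i+1))⁻¹ * (N : ℝ≥0∞)⁻¹ with hw_def
  have hw_ne : w ≠ ⊤ := by
    rw [hw_def]
    exact ENNReal.mul_ne_top (by simp) (by simp [hN_pos.ne'])
  have hlev : ∀ B : Finset Z, B ⊆ F i → w * B.card ≤ mkMu F ↑B := by
    intro B hB
    calc w * B.card = ((2:ℝ≥0∞)^(i+1))⁻¹ * ((N : ℝ≥0∞)⁻¹ * B.card) := by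
          rw [hw_def, mul_assoc]
      _ ≤ ((2:ℝ≥0∞)^(i+1))⁻¹ * unifOn (F i) ↑B := by
          exact mul_le_mul_right (unifOn_apply_ge hB) _
      _ ≤ mkMu F ↑B := mkMu_level_le F (B.finite_toSet.measurableSet) i
  have hsep4 : ∀ x ∈ F i, ∀ y ∈ F i, x ≠ y → 4 * dlt i < dist x y := by
    intro x hx y hy hxy
    rw [← eta_eq]
    exact hFsep i x hx y hy hxy
  have hkey := level_lower (dlt_pos i) hsep4 (mkMu F) hw_ne hlev hSsupp
  have hchain : 2 * dlt i * (w.toReal * ((N : ℝ) - S.card)) ≤ dlt i * ((2:ℝ)^(i+1))⁻¹ := by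
    calc 2 * dlt i * (w.toReal * ((N : ℝ) - S.card)) ≤ Wass 1 (mkMu F) ν := hkey
      _ ≤ ε := hW
      _ ≤ epsl i := hεi
      _ = dlt i * ((2:ℝ)^(i+1))⁻¹ := epsl_eq i
  have hwtoReal : w.toReal = ((2:ℝ)^(i+1))⁻¹ * (N:ℝ)⁻¹ := by
    rw [hw_def, ENNReal.toReal_mul, ENNReal.toReal_inv, ENNReal.toReal_inv,
      ENNReal.toReal_pow, ENNReal.toReal_ofNat, ENNReal.toReal_natCast]
  rw [hwtoReal] at hchain
  -- algebra: conclude N ≤ 2 * S.card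
  have hd : (0:ℝ) < dlt i := dlt_pos i
  have hc : (0:ℝ) < ((2:ℝ)^(i+1))⁻¹ := by positivity
  have hNr : (0:ℝ) < (N:ℝ) := by exact_mod_cast hN_pos
  have hN0 : (N:ℝ) ≠ 0 := hNr.ne'
  have hfinal : (N : ℝ) ≤ 2 * S.card := by
    have h4 : (dlt i * ((2:ℝ)^(i+1))⁻¹) * (2*((N:ℝ) - S.card))
        ≤ (dlt i * ((2:ℝ)^(i+1))⁻¹) * (N:ℝ) := by
      calc (dlt i * ((2:ℝ)^(i+1))⁻¹) * (2*((N:ℝ) - S.card))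
          = (2 * dlt i * (((2:ℝ)^(i+1))⁻¹ * (N:ℝ)⁻¹ * ((N:ℝ) - S.card))) * (N:ℝ) := by
            field_simp
        _ ≤ (dlt i * ((2:ℝ)^(i+1))⁻¹) * (N:ℝ) :=
            mul_le_mul_of_nonneg_right hchain hNr.le
    have h5 : 2*((N:ℝ) - S.card) ≤ (N:ℝ) :=
      le_of_mul_le_mul_left h4 (mul_pos hd hc)
    linarith
  have hgoal : ((F i).card : ℝ) ≤ 2 * (S.card : ℝ) := hfinal
  rw [hFcard i, hScard] at hgoal
  exact_mod_cast hgoal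

end QuantLower
noncomputable section Asymp

/-- `Kc = -log log 2 > 0` -/
def Kc : ℝ := -Real.log (Real.log 2)

lemma log_two_pos' : 0 < Real.log 2 := Real.log_pos (by norm_num)

lemma loglog_two_neg : Real.log (Real.log 2) < 0 := by
  apply Real.log_neg log_two_pos'
  linarith [Real.log_two_lt_d9]

lemma Kc_pos : 0 < Kc := by
  rw [Kc]; linarith [loglog_two_neg]

lemma one_lt_log_nat {m : ℕ} (h : 3 ≤ m) : 1 < Real.log m := by
  rw [show (1:ℝ) = Real.log (Real.exp 1) by simp]
  apply Real.log_lt_log (Real.exp_pos 1)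
  have h9 := Real.exp_one_lt_d9
  have h3 : (3:ℝ) ≤ m := by exact_mod_cast h
  linarith

lemma loglog_nonneg {m : ℕ} (h : 3 ≤ m) : 0 ≤ Real.log (Real.log m) :=
  Real.log_nonneg (le_of_lt (one_lt_log_nat h))

lemma loglog_le_zero {q : ℕ} (h : q ≤ 2) : Real.log (Real.log q) ≤ 0 := by
  interval_cases q
  · simp
  · simp
  · exact le_of_lt loglog_two_neg

lemma loglog_ge_negK (q : ℕ) : -Kc ≤ Real.log (Real.log q) := by
  rcases le_or_gt q 2 with h | h
  · interval_cases q
    · simp; linarith [Kc_pos]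
    · simp; linarith [Kc_pos]
    · rw [Kc]; push_cast; simp
  · linarith [loglog_nonneg h, Kc_pos]

lemma loglog_mono {q m : ℕ} (h3 : 3 ≤ q) (hqm : q ≤ m) :
    Real.log (Real.log q) ≤ Real.log (Real.log m) := by
  have h1 : Real.log q ≤ Real.log m := by
    apply Real.log_le_log (by positivity)
    exact_mod_cast hqm
  apply Real.log_le_log (by linarith [one_lt_log_nat h3]) h1

lemma div_mono_num {a b c : ℝ} (h : a ≤ b) (hc : 0 < c) : a/c ≤ b/c := by
  rw [div_le_div_iff₀ hc hc]
  nlinarith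

lemma div_le_mul_div {x L1 L2 c : ℝ} (hL1 : 0 < L1) (hL2 : 0 < L2) (hx : 0 ≤ x)
    (h : L2 ≤ c*L1) : x/L1 ≤ c*(x/L2) := by
  rw [← mul_div_assoc, div_le_div_iff₀ hL1 hL2]
  nlinarith [mul_le_mul_of_nonneg_left h hx]

/-- pass to the limit `c → 1⁺` -/
lemma le_of_mul_near {A b : ℝ} (h : ∀ c : ℝ, 1 < c → A ≤ c*b + (c-1)) : A ≤ b := by
  by_cases hb : b + 1 ≤ 0
  · have h2 := h 2 (by norm_num)
    linarith
  · push_neg at hb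
    refine le_of_forall_pos_le_add fun ε hε => ?_
    have hd : 0 < ε/(b+1) := div_pos hε hb
    have h2 := h (1 + ε/(b+1)) (by linarith)
    have heq : (1 + ε/(b+1))*b + ((1 + ε/(b+1)) - 1) = b + ε := by
      field_simp
      ring
    linarith [heq ▸ h2]

/-- double-log comparison when `q ≤ m` (upper bound direction). -/
lemma A1_s19 {q m : ℕ} (hqm : q ≤ m) {L1 L2 c e : ℝ}
    (hL1 : 0 < L1) (hL2 : 0 < L2) (hc : 1 < c) (he : 0 < e)
    (h21 : L2 ≤ c * L1) (hK : c * Kc ≤ e * L2) :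
    Real.log (Real.log q) / L1 ≤ c * (Real.log (Real.log m) / L2) + e := by
  have hA : c*Kc/L2 ≤ e := (div_le_iff₀ hL2).mpr hK
  rcases le_or_gt m 2 with hm | hm
  · have h1 : Real.log (Real.log q) ≤ 0 := loglog_le_zero (le_trans hqm hm)
    have h3 : Real.log (Real.log q) / L1 ≤ 0 := div_nonpos_of_nonpos_of_nonneg h1 hL1.le
    have h4 : (-Kc)/L2 ≤ Real.log (Real.log m) / L2 := by
      gcongr
      exact loglog_ge_negK m
    have hC : c*((-Kc)/L2) ≤ c*(Real.log (Real.log m)/L2) :=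
      mul_le_mul_of_nonneg_left h4 (by linarith)
    have hB : c*((-Kc)/L2) = -(c*Kc/L2) := by ring
    linarith
  · have hm3 : 3 ≤ m := hm
    have hllm : 0 ≤ Real.log (Real.log m) := loglog_nonneg hm3
    rcases le_or_gt q 2 with hq2 | hq2
    · have h1 : Real.log (Real.log q) / L1 ≤ 0 :=
        div_nonpos_of_nonpos_of_nonneg (loglog_le_zero hq2) hL1.le
      have h2 : 0 ≤ c * (Real.log (Real.log m) / L2) :=
        mul_nonneg (by linarith) (div_nonneg hllm hL2.le)
      linarith
    · have hq3 : 3 ≤ q := hq2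
      have hll : Real.log (Real.log q) ≤ Real.log (Real.log m) := loglog_mono hq3 hqm
      have key : Real.log (Real.log m) / L1 ≤ c * (Real.log (Real.log m) / L2) :=
        div_le_mul_div hL1 hL2 hllm h21
      have h5 : Real.log (Real.log q) / L1 ≤ Real.log (Real.log m) / L1 := by
        gcongr
      linarith

/-- double-log comparison when `N ≤ 2q` (lower bound direction). -/
lemma A2 {N q : ℕ} (hq : 1 ≤ q) (hNq : N ≤ 2*q) {L1 L2 c e : ℝ}
    (hL1 : 0 < L1) (hL2 : 0 < L2) (hc : 1 < c) (he : 0 < e)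
    (h21 : L2 ≤ c * L1) (hlog2 : 2 * Real.log 2 ≤ e * L1) (hK : 2 * (c * Kc) ≤ e * L2) :
    Real.log (Real.log N) / L1 ≤ c * (Real.log (Real.log q) / L2) + e := by
  have hA : c*Kc/L2 ≤ e/2 := by
    rw [div_le_iff₀ hL2]
    linarith
  have hRge : -(e/2) ≤ c * (Real.log (Real.log q) / L2) := by
    have h4 : (-Kc)/L2 ≤ Real.log (Real.log q) / L2 := by
      gcongr
      exact loglog_ge_negK q
    have hC : c*((-Kc)/L2) ≤ c*(Real.log (Real.log q)/L2) :=
      mul_le_mul_of_nonneg_left h4 (by linarith)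
    have hB : c*((-Kc)/L2) = -(c*Kc/L2) := by ring
    linarith
  rcases le_or_gt N 2 with hN2 | hN2
  · have h1 : Real.log (Real.log N) / L1 ≤ 0 :=
      div_nonpos_of_nonpos_of_nonneg (loglog_le_zero hN2) hL1.le
    linarith
  · have hN3 : 3 ≤ N := hN2
    have hq2 : 2 ≤ q := by omega
    have hlogq : Real.log 2 ≤ Real.log q := by
      apply Real.log_le_log (by norm_num)
      exact_mod_cast hq2
    have hlogq0 : 0 < Real.log q := lt_of_lt_of_le log_two_pos' hlogq
    have hq0 : (0:ℝ) < q := by exact_mod_cast hq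
    have hlogN : Real.log N ≤ 2 * Real.log q := by
      have h1 : Real.log N ≤ Real.log (2*(q:ℝ)) := by
        apply Real.log_le_log (by positivity)
        exact_mod_cast hNq
      rw [Real.log_mul (by norm_num) hq0.ne'] at h1
      linarith
    have hllN : Real.log (Real.log N) ≤ Real.log 2 + Real.log (Real.log q) := by
      have h1 : Real.log (Real.log N) ≤ Real.log (2 * Real.log q) := by
        apply Real.log_le_log (by linarith [one_lt_log_nat hN3]) hlogN
      rw [Real.log_mul (by norm_num) hlogq0.ne'] at h1
      exact h1
    have hlog2L : Real.log 2 / L1 ≤ e/2 := by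
      rw [div_le_iff₀ hL1]
      linarith
    rcases le_or_gt 0 (Real.log (Real.log q)) with hllq | hllq
    · have key : Real.log (Real.log q) / L1 ≤ c * (Real.log (Real.log q) / L2) :=
        div_le_mul_div hL1 hL2 hllq h21
      have hsplit : Real.log (Real.log N) / L1
          ≤ Real.log 2 / L1 + Real.log (Real.log q) / L1 := by
        rw [← add_div]
        exact div_mono_num hllN hL1
      linarith
    · have h6 : Real.log (Real.log N) / L1 ≤ Real.log 2 / L1 :=
        div_mono_num (by linarith) hL1
      linarith

end Asymp
section LimCompare

open Filter

lemma lim_eq_of_comp {l : Filter ℝ} [l.NeBot] {f g : ℝ → ℝ}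
    (hf0 : ∀ d : ℝ, 0 < d → ∀ᶠ ε in l, -d ≤ f ε)
    (hg0 : ∀ d : ℝ, 0 < d → ∀ᶠ ε in l, -d ≤ g ε)
    (H : ∀ c : ℝ, 1 < c → ∃ σ τ σ' τ' : ℝ → ℝ,
      Tendsto σ l l ∧ Tendsto τ l l ∧ Tendsto σ' l l ∧ Tendsto τ' l l ∧
      (∀ᶠ ε in l, f ε ≤ c * g (τ ε) + (c-1)) ∧
      (∀ᶠ ε in l, g (σ ε) ≤ c * f ε + (c-1)) ∧
      (∀ᶠ ε in l, g ε ≤ c * f (τ' ε) + (c-1)) ∧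
      (∀ᶠ ε in l, f (σ' ε) ≤ c * g ε + (c-1))) :
    liminf f l = liminf g l ∧ limsup f l = limsup g l := by
  have hAgf : ∀ c : ℝ, 1 < c → ∀ a : ℝ, (∀ᶠ x in l, a ≤ g x) →
      (∀ᶠ x in l, (a-(c-1))/c ≤ f x) := by
    intro c hc a ha
    obtain ⟨σ, τ, σ', τ', hσ, hτ, hσ', hτ', h1, h2, h3, h4⟩ := H c hc
    filter_upwards [hσ.eventually ha, h2] with ε he1 he2
    rw [div_le_iff₀ (by linarith : (0:ℝ) < c)]
    linarith
  have hAfg : ∀ c : ℝ, 1 < c → ∀ a : ℝ, (∀ᶠ x in l, a ≤ f x) →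
      (∀ᶠ x in l, (a-(c-1))/c ≤ g x) := by
    intro c hc a ha
    obtain ⟨σ, τ, σ', τ', hσ, hτ, hσ', hτ', h1, h2, h3, h4⟩ := H c hc
    filter_upwards [hσ'.eventually ha, h4] with ε he1 he2
    rw [div_le_iff₀ (by linarith : (0:ℝ) < c)]
    linarith
  have hUgf : ∀ c : ℝ, 1 < c → ∀ b : ℝ, (∀ᶠ x in l, g x ≤ b) →
      (∀ᶠ x in l, f x ≤ c*b+(c-1)) := by
    intro c hc b hb
    obtain ⟨σ, τ, σ', τ', hσ, hτ, hσ', hτ', h1, h2, h3, h4⟩ := H c hc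
    filter_upwards [hτ.eventually hb, h1] with ε he1 he2
    nlinarith
  have hUfg : ∀ c : ℝ, 1 < c → ∀ b : ℝ, (∀ᶠ x in l, f x ≤ b) →
      (∀ᶠ x in l, g x ≤ c*b+(c-1)) := by
    intro c hc b hb
    obtain ⟨σ, τ, σ', τ', hσ, hτ, hσ', hτ', h1, h2, h3, h4⟩ := H c hc
    filter_upwards [hτ'.eventually hb, h3] with ε he1 he2
    nlinarith
  constructor
  · -- liminf
    rw [liminf_eq, liminf_eq]
    have hAf_ne : {a : ℝ | ∀ᶠ x in l, a ≤ f x}.Nonempty := ⟨-1, hf0 1 one_pos⟩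
    have hAg_ne : {a : ℝ | ∀ᶠ x in l, a ≤ g x}.Nonempty := ⟨-1, hg0 1 one_pos⟩
    by_cases hbf : BddAbove {a : ℝ | ∀ᶠ x in l, a ≤ f x}
    · have hbg : BddAbove {a : ℝ | ∀ᶠ x in l, a ≤ g x} := by
        rcases hbf with ⟨M, hM⟩
        refine ⟨2*M+1, fun a ha => ?_⟩
        have hmem := hAgf 2 (by norm_num) a ha
        have h2 := hM hmem
        have h3 : (a-(2-1))/2 ≤ M := h2
        rw [div_le_iff₀ (by norm_num : (0:ℝ) < 2)] at h3
        linarith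
      apply le_antisymm
      · apply csSup_le hAf_ne
        intro a ha
        apply le_of_mul_near
        intro c hc
        have hmem := hAfg c hc a ha
        have h2 : (a-(c-1))/c ≤ sSup {a : ℝ | ∀ᶠ x in l, a ≤ g x} := le_csSup hbg hmem
        rw [div_le_iff₀ (by linarith : (0:ℝ) < c)] at h2
        linarith
      · apply csSup_le hAg_ne
        intro a ha
        apply le_of_mul_near
        intro c hc
        have hmem := hAgf c hc a ha
        have h2 : (a-(c-1))/c ≤ sSup {a : ℝ | ∀ᶠ x in l, a ≤ f x} := le_csSup hbf hmem
        rw [div_le_iff₀ (by linarith : (0:ℝ) < c)] at h2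
        linarith
    · have hbg : ¬ BddAbove {a : ℝ | ∀ᶠ x in l, a ≤ g x} := by
        intro hbg
        apply hbf
        rcases hbg with ⟨M, hM⟩
        refine ⟨2*M+1, fun a ha => ?_⟩
        have hmem := hAfg 2 (by norm_num) a ha
        have h3 : (a-(2-1))/2 ≤ M := hM hmem
        rw [div_le_iff₀ (by norm_num : (0:ℝ) < 2)] at h3
        linarith
      rw [Real.sSup_of_not_bddAbove hbf, Real.sSup_of_not_bddAbove hbg]
  · -- limsup
    rw [limsup_eq, limsup_eq]
    have hbddf : BddBelow {a : ℝ | ∀ᶠ x in l, f x ≤ a} := by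
      refine ⟨-1, fun a ha => ?_⟩
      rcases (ha.and (hf0 1 one_pos)).exists with ⟨x, hx1, hx2⟩
      linarith
    have hbddg : BddBelow {a : ℝ | ∀ᶠ x in l, g x ≤ a} := by
      refine ⟨-1, fun a ha => ?_⟩
      rcases (ha.and (hg0 1 one_pos)).exists with ⟨x, hx1, hx2⟩
      linarith
    by_cases hUf_ne : {a : ℝ | ∀ᶠ x in l, f x ≤ a}.Nonempty
    · have hUg_ne : {a : ℝ | ∀ᶠ x in l, g x ≤ a}.Nonempty := by
        rcases hUf_ne with ⟨b, hb⟩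
        exact ⟨2*b+(2-1), hUfg 2 (by norm_num) b hb⟩
      apply le_antisymm
      · apply le_csInf hUg_ne
        intro b hb
        apply le_of_mul_near
        intro c hc
        exact csInf_le hbddf (hUgf c hc b hb)
      · apply le_csInf hUf_ne
        intro b hb
        apply le_of_mul_near
        intro c hc
        exact csInf_le hbddg (hUfg c hc b hb)
    · have hUg_ne : ¬ {a : ℝ | ∀ᶠ x in l, g x ≤ a}.Nonempty := by
        rintro ⟨b, hb⟩
        exact hUf_ne ⟨2*b+(2-1), hUgf 2 (by norm_num) b hb⟩
      rw [Set.not_nonempty_iff_eq_empty] at hUf_ne hUg_ne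
      rw [hUf_ne, hUg_ne]

end LimCompare
noncomputable section Indices

open Filter

lemma ev_pos : ∀ᶠ ε in nhdsWithin (0:ℝ) (Set.Ioi 0), 0 < ε :=
  eventually_mem_nhdsWithin

lemma ev_small {δ : ℝ} (hδ : 0 < δ) : ∀ᶠ ε in nhdsWithin (0:ℝ) (Set.Ioi 0), ε < δ :=
  (eventually_lt_nhds hδ).filter_mono nhdsWithin_le_nhds

/-- eventually `M ≤ -log ε` -/
lemma ev_L_ge (M : ℝ) : ∀ᶠ ε in nhdsWithin (0:ℝ) (Set.Ioi 0), M ≤ -Real.log ε := by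
  filter_upwards [ev_pos, ev_small (Real.exp_pos (-M))] with ε h1 h2
  have h3 : Real.log ε < Real.log (Real.exp (-M)) := Real.log_lt_log h1 h2
  rw [Real.log_exp] at h3
  linarith

lemma Kc_le_one : Kc ≤ 1 := by
  have h1 : Real.exp (-1) ≤ Real.log 2 := by
    have h2 := Real.exp_one_gt_d9
    have h3 : Real.exp (-1) = 1 / Real.exp 1 := by
      rw [Real.exp_neg]
      ring
    have h4 : 1 / Real.exp 1 ≤ 1 / 2.7182818283 := by
      apply div_le_div_of_nonneg_left (by norm_num) (by norm_num) (le_of_lt h2)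
    have h5 := Real.log_two_gt_d9
    rw [h3]
    calc 1 / Real.exp 1 ≤ 1 / 2.7182818283 := h4
      _ ≤ 0.6931471803 := by norm_num
      _ ≤ Real.log 2 := le_of_lt h5
  have h6 : Real.log (Real.exp (-1)) ≤ Real.log (Real.log 2) :=
    Real.log_le_log (Real.exp_pos _) h1
  rw [Real.log_exp] at h6
  rw [Kc]
  linarith

/-- index of the largest `epsl` level above `ε` -/
def idx0 (ε : ℝ) : ℕ := sSup {i | ε ≤ epsl i}

lemma idx0_spec {ε : ℝ} (hε : 0 < ε) {J : ℕ} (hJ : ε ≤ epsl J) :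
    J ≤ idx0 ε ∧ ε ≤ epsl (idx0 ε) ∧ epsl (idx0 ε + 1) < ε := by
  have hev : ∀ᶠ i in (atTop : Filter ℕ), epsl i < ε :=
    epsl_tendsto.eventually (eventually_lt_nhds hε)
  obtain ⟨j, hj⟩ := eventually_atTop.mp hev
  have hbdd : BddAbove {i | ε ≤ epsl i} := by
    refine ⟨j, fun i hi => ?_⟩
    by_contra h
    push_neg at h
    exact absurd (lt_of_le_of_lt hi (hj i h.le)) (lt_irrefl ε)
  have hne : {i | ε ≤ epsl i}.Nonempty := ⟨J, hJ⟩
  refine ⟨le_csSup hbdd hJ, Nat.sSup_mem hne hbdd, ?_⟩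
  by_contra h
  push_neg at h
  have : idx0 ε + 1 ≤ idx0 ε := le_csSup hbdd h
  omega

/-- smallest index with `eta i ≤ ε` -/
def idx1 (ε : ℝ) : ℕ := sInf {i | eta i ≤ ε}

lemma idx1_spec {ε : ℝ} (hε : 0 < ε) :
    eta (idx1 ε) ≤ ε ∧ ∀ j, j < idx1 ε → ε < eta j := by
  have hev : ∀ᶠ i in (atTop : Filter ℕ), eta i < ε :=
    eta_tendsto.eventually (eventually_lt_nhds hε)
  have hne : {i | eta i ≤ ε}.Nonempty := by
    obtain ⟨i, hi⟩ := hev.exists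
    exact ⟨i, le_of_lt hi⟩
  refine ⟨Nat.sInf_mem hne, fun j hj => ?_⟩
  by_contra h
  push_neg at h
  exact absurd (Nat.sInf_le h) (not_le.mpr hj)

lemma idx1_large {ε : ℝ} (hε : 0 < ε) {J : ℕ} (hJ : ε < eta J) : J < idx1 ε := by
  by_contra h
  push_neg at h
  have h2 : eta (idx1 ε) ≤ ε := (idx1_spec hε).1
  have h3 : eta J ≤ eta (idx1 ε) := eta_anti h
  linarith

lemma tendsto_half :
    Tendsto (fun ε : ℝ => ε/2) (nhdsWithin 0 (Set.Ioi 0)) (nhdsWithin 0 (Set.Ioi 0)) := by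
  rw [tendsto_nhdsWithin_iff]
  constructor
  · have h := ((continuous_id.div_const (2:ℝ)).tendsto 0).mono_left
      (nhdsWithin_le_nhds (s := Set.Ioi (0:ℝ)))
    simpa using h
  · filter_upwards [ev_pos] with ε hε
    exact Set.mem_Ioi.mpr (by linarith)

lemma tendsto_double :
    Tendsto (fun ε : ℝ => 2*ε) (nhdsWithin 0 (Set.Ioi 0)) (nhdsWithin 0 (Set.Ioi 0)) := by
  rw [tendsto_nhdsWithin_iff]
  constructor
  · have hc : Continuous fun x : ℝ => (2:ℝ)*x := continuous_const.mul continuous_id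
    have h := (hc.tendsto 0).mono_left (nhdsWithin_le_nhds (s := Set.Ioi (0:ℝ)))
    simpa using h
  · filter_upwards [ev_pos] with ε hε
    exact Set.mem_Ioi.mpr (by linarith)

lemma ev_idx0_large (J : ℕ) :
    ∀ᶠ ε in nhdsWithin (0:ℝ) (Set.Ioi 0), J ≤ idx0 ε := by
  filter_upwards [ev_pos, ev_small (epsl_pos J)] with ε h1 h2
  exact (idx0_spec h1 (le_of_lt h2)).1

lemma ev_idx1_large (J : ℕ) :
    ∀ᶠ ε in nhdsWithin (0:ℝ) (Set.Ioi 0), J ≤ idx1 ε := by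
  filter_upwards [ev_pos, ev_small (eta_pos J)] with ε h1 h2
  exact le_of_lt (idx1_large h1 h2)

lemma tendsto_eta_idx0 :
    Tendsto (fun ε : ℝ => eta (idx0 ε)) (nhdsWithin 0 (Set.Ioi 0))
      (nhdsWithin 0 (Set.Ioi 0)) := by
  rw [tendsto_nhdsWithin_iff]
  constructor
  · rw [tendsto_order]
    constructor
    · intro a ha
      filter_upwards with ε
      exact lt_of_lt_of_le ha (le_of_lt (eta_pos _))
    · intro b hb
      obtain ⟨j, hj⟩ := eventually_atTop.mp (eta_tendsto.eventually (eventually_lt_nhds hb))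
      filter_upwards [ev_idx0_large j] with ε h1
      exact hj _ h1
  · filter_upwards with ε
    exact Set.mem_Ioi.mpr (eta_pos _)

lemma tendsto_epsl_idx1 :
    Tendsto (fun ε : ℝ => epsl (idx1 ε)) (nhdsWithin 0 (Set.Ioi 0))
      (nhdsWithin 0 (Set.Ioi 0)) := by
  rw [tendsto_nhdsWithin_iff]
  constructor
  · rw [tendsto_order]
    constructor
    · intro a ha
      filter_upwards with ε
      exact lt_of_lt_of_le ha (le_of_lt (epsl_pos _))
    · intro b hb
      obtain ⟨j, hj⟩ := eventually_atTop.mp (epsl_tendsto.eventually (eventually_lt_nhds hb))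
      filter_upwards [ev_idx1_large j] with ε h1
      exact hj _ h1
  · filter_upwards with ε
    exact Set.mem_Ioi.mpr (epsl_pos _)

end Indices
set_option maxHeartbeats 2000000 in
theorem stmt19 (Z : Type*) [MetricSpace Z] [CompactSpace Z] [MeasurableSpace Z] [BorelSpace Z]
    (Y : Set Z) (hY : MeasurableSet Y) (hYne : Y.Nonempty) :
    ∃ μ : Measure Z, IsProbabilityMeasure μ ∧ μ Y = 1 ∧
      liminf (fun ε : ℝ => Real.log (Real.log (quantW 1 μ ε)) / (-Real.log ε))
          (nhdsWithin 0 (Set.Ioi 0)) =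
        liminf (fun ε : ℝ => Real.log (Real.log (relPackNum Y ε)) / (-Real.log ε))
          (nhdsWithin 0 (Set.Ioi 0)) ∧
      limsup (fun ε : ℝ => Real.log (Real.log (quantW 1 μ ε)) / (-Real.log ε))
          (nhdsWithin 0 (Set.Ioi 0)) =
        limsup (fun ε : ℝ => Real.log (Real.log (relPackNum Y ε)) / (-Real.log ε))
          (nhdsWithin 0 (Set.Ioi 0)) := by
  classical
  have hex : ∀ i : ℕ, ∃ F : Finset Z, ↑F ⊆ Y ∧
      (∀ x ∈ F, ∀ y ∈ F, x ≠ y → eta i < dist x y) ∧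
      F.card = relPackNum Y (eta i) ∧ (∀ y ∈ Y, ∃ x ∈ F, dist y x ≤ eta i) ∧ F.Nonempty :=
    fun i => exists_max_sep hYne (eta_pos i)
  choose F hFY hFsep hFcard hFnet hFne using hex
  haveI hprob : IsProbabilityMeasure (mkMu F) := mkMu_prob F hFne
  have hμY : mkMu F Y = 1 := mkMu_apply_eq_one F hFne hY (fun i x hx => hFY i hx)
  -- basic positivity of the log-denominator
  have hLpos : ∀ {ε : ℝ}, 0 < ε → ε < 1 → 0 < -Real.log ε := by
    intro ε h1 h2
    have := Real.log_neg h1 h2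
    linarith
  -- nonnegativity hypotheses for the comparison lemma
  have hev_ge : ∀ (n : ℝ → ℕ) (d : ℝ), 0 < d → ∀ᶠ ε in nhdsWithin (0:ℝ) (Set.Ioi 0),
      -d ≤ Real.log (Real.log (n ε)) / (-Real.log ε) := by
    intro n d hd
    filter_upwards [ev_L_ge (Kc/d), ev_L_ge 1] with ε h1 h2
    have hL : 0 < -Real.log ε := by linarith
    have h3 : (-Kc) / (-Real.log ε) ≤ Real.log (Real.log (n ε)) / (-Real.log ε) :=
      div_mono_num (loglog_ge_negK (n ε)) hL
    have h4 : -d ≤ (-Kc) / (-Real.log ε) := by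
      rw [neg_div, neg_le_neg_iff, div_le_iff₀ hL]
      have h5 := (div_le_iff₀ hd).mp h1
      nlinarith [h5]
    linarith
  have main := lim_eq_of_comp (l := nhdsWithin (0:ℝ) (Set.Ioi 0))
    (f := fun ε : ℝ => Real.log (Real.log (quantW 1 (mkMu F) ε)) / (-Real.log ε))
    (g := fun ε : ℝ => Real.log (Real.log (relPackNum Y ε)) / (-Real.log ε))
    (hev_ge _) (hev_ge _) ?_
  · exact ⟨mkMu F, hprob, hμY, main.1, main.2⟩
  intro c hc
  have hcpos : (0:ℝ) < c := by linarith
  have hepos : (0:ℝ) < c - 1 := by linarith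
  refine ⟨fun ε => eta (idx0 ε), fun ε => ε/2, fun ε => 2*ε, fun ε => epsl (idx1 ε),
    tendsto_eta_idx0, tendsto_half, tendsto_double, tendsto_epsl_idx1, ?_, ?_, ?_, ?_⟩
  · -- (I) f ε ≤ c g(ε/2) + (c-1)
    filter_upwards [ev_pos, ev_small one_pos, ev_L_ge (Real.log 2/(c-1)),
      ev_L_ge (c*Kc/(c-1))] with ε hp h1 hB1 hB2
    have hL : 0 < -Real.log ε := hLpos hp h1
    have hLhalf : -Real.log (ε/2) = -Real.log ε + Real.log 2 := by
      rw [Real.log_div hp.ne' (by norm_num : (2:ℝ) ≠ 0)]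
      ring
    have hq := quantW_le_relPackNum hY hYne (mkMu F) hμY hp
    have h21 : -Real.log (ε/2) ≤ c * (-Real.log ε) := by
      rw [hLhalf]
      have h5 := (div_le_iff₀ hepos).mp hB1
      nlinarith
    have hK : c * Kc ≤ (c-1) * (-Real.log (ε/2)) := by
      have h5 := (div_le_iff₀ hepos).mp hB2
      rw [hLhalf]
      nlinarith [log_two_pos']
    exact A1_s19 hq hL (by rw [hLhalf]; linarith [log_two_pos']) hc hepos h21 hK
  · -- (II) g (eta (idx0 ε)) ≤ c f ε + (c-1)
    filter_upwards [ev_pos, ev_small (epsl_pos (max 4 (Nat.ceil ((6+5*c)/(c-1)))))]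
      with ε hp hsm
    obtain ⟨hJi, hεle, hεgt⟩ := idx0_spec hp (le_of_lt hsm)
    set i : ℕ := idx0 ε with hi_def
    have hi4 : (4:ℝ) ≤ (i:ℝ) := by
      have h0 : 4 ≤ i := le_trans (le_max_left _ _) hJi
      exact_mod_cast h0
    have hiceil : ((6+5*c)/(c-1)) ≤ (i:ℝ) := by
      have h1 : Nat.ceil ((6+5*c)/(c-1)) ≤ i := le_trans (le_max_right _ _) hJi
      calc ((6+5*c)/(c-1)) ≤ (Nat.ceil ((6+5*c)/(c-1)) : ℝ) := Nat.le_ceil _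
        _ ≤ (i:ℝ) := by exact_mod_cast h1
    have hei : 6+5*c ≤ (c-1)*(i:ℝ) := by
      rw [div_le_iff₀ hepos] at hiceil
      linarith
    have hprod : (6+5*c)*(i:ℝ) ≤ (c-1)*(i:ℝ)^2 := by
      have h0 := mul_le_mul_of_nonneg_right hei (by positivity : (0:ℝ) ≤ (i:ℝ))
      nlinarith [h0]
    have hL1eq : -Real.log (eta i) = ((i:ℝ)^2-2)*Real.log 2 := neg_log_eta i
    have hL1pos : 0 < -Real.log (eta i) := by
      rw [hL1eq]
      have h0 : (0:ℝ) < (i:ℝ)^2-2 := by nlinarith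
      exact mul_pos h0 log_two_pos'
    have hL2low : ((i:ℝ)^2+(i:ℝ)+1)*Real.log 2 ≤ -Real.log ε := by
      have h1 : Real.log ε ≤ Real.log (epsl i) := Real.log_le_log hp hεle
      have h2 := neg_log_epsl i
      linarith
    have hL2pos : 0 < -Real.log ε :=
      lt_of_lt_of_le (mul_pos (by positivity) log_two_pos') hL2low
    have hL2high : -Real.log ε ≤ ((i:ℝ)^2+3*(i:ℝ)+3)*Real.log 2 := by
      have h1 : Real.log (epsl (i+1)) ≤ Real.log ε :=
        Real.log_le_log (epsl_pos _) (le_of_lt hεgt)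
      have h2 := neg_log_epsl (i+1)
      push_cast at h2
      nlinarith [h1, h2]
    have hNq' := quant_lower hY hYne F hFY hFsep hFcard hFne hμY i hp hεle
    have hq1 := one_le_quantW hY hYne (mkMu F) hμY hp
    have hNq : relPackNum Y (eta i) ≤ 2 * quantW 1 (mkMu F) ε := by
      have h1 : (relPackNum Y (eta i) : ℝ) ≤ ((2 * quantW 1 (mkMu F) ε : ℕ) : ℝ) := by
        push_cast
        exact hNq'
      exact_mod_cast h1
    have hpoly : (i:ℝ)^2+3*(i:ℝ)+3 ≤ c*((i:ℝ)^2-2) := by nlinarith [hprod, hi4, hcpos]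
    have h21 : -Real.log ε ≤ c * (-Real.log (eta i)) := by
      rw [hL1eq]
      calc -Real.log ε ≤ ((i:ℝ)^2+3*(i:ℝ)+3)*Real.log 2 := hL2high
        _ ≤ (c*((i:ℝ)^2-2))*Real.log 2 := by nlinarith [hpoly, log_two_pos']
        _ = c*(((i:ℝ)^2-2)*Real.log 2) := by ring
    have hlog2 : 2*Real.log 2 ≤ (c-1)*(-Real.log (eta i)) := by
      rw [hL1eq]
      have hii : (i:ℝ) ≤ (i:ℝ)^2-2 := by nlinarith [hi4]
      have h1 : (c-1)*(i:ℝ) ≤ (c-1)*((i:ℝ)^2-2) :=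
        mul_le_mul_of_nonneg_left hii (le_of_lt hepos)
      nlinarith [log_two_pos', hei, h1]
    have hKbig : 2*(c*Kc) ≤ (c-1)*(-Real.log ε) := by
      have hbig : 24+20*c ≤ (c-1)*((i:ℝ)^2+(i:ℝ)+1) := by
        nlinarith [hprod, hi4, hcpos, hepos]
      have hlb := Real.log_two_gt_d9
      have hstep : (24+20*c)*(0.6931471803:ℝ) ≤ ((c-1)*((i:ℝ)^2+(i:ℝ)+1))*Real.log 2 :=
        mul_le_mul hbig (le_of_lt hlb) (by norm_num) (by nlinarith [hbig, hcpos])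
      have h2 : ((c-1)*((i:ℝ)^2+(i:ℝ)+1))*Real.log 2 ≤ (c-1)*(-Real.log ε) := by
        have h3 := mul_le_mul_of_nonneg_left hL2low (le_of_lt hepos)
        nlinarith [h3]
      nlinarith [hstep, h2, mul_le_mul_of_nonneg_left Kc_le_one
        (by linarith : (0:ℝ) ≤ 2*c), hcpos]
    exact A2 hq1 hNq hL1pos hL2pos hc hepos h21 hlog2 hKbig
  · -- (III) g ε ≤ c f (epsl (idx1 ε)) + (c-1)
    filter_upwards [ev_pos, ev_small (eta_pos (max 5 (Nat.ceil ((6+5*c)/(c-1)) + 1)))]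
      with ε hp hsm
    have hJlt : max 5 (Nat.ceil ((6+5*c)/(c-1)) + 1) < idx1 ε := idx1_large hp hsm
    obtain ⟨hetai, hgt⟩ := idx1_spec hp
    set i : ℕ := idx1 ε with hi_def
    have hi5 : 5 ≤ i := by
      have := le_max_left 5 (Nat.ceil ((6+5*c)/(c-1)) + 1)
      omega
    have hone : 1 ≤ i := by omega
    have hcast : ((i-1:ℕ):ℝ) = (i:ℝ)-1 := by
      rw [Nat.cast_sub hone, Nat.cast_one]
    have him1 : ε < eta (i-1) := hgt (i-1) (by omega)
    have hi4 : (4:ℝ) ≤ (i:ℝ)-1 := by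
      have h0 : (5:ℝ) ≤ (i:ℝ) := by exact_mod_cast hi5
      linarith
    have hi1R : ((6+5*c)/(c-1)) ≤ (i:ℝ)-1 := by
      have h1 : Nat.ceil ((6+5*c)/(c-1)) + 1 ≤ max 5 (Nat.ceil ((6+5*c)/(c-1)) + 1) :=
        le_max_right _ _
      have h2 : Nat.ceil ((6+5*c)/(c-1)) ≤ i - 1 := by omega
      have h3 : (Nat.ceil ((6+5*c)/(c-1)) : ℝ) ≤ ((i-1:ℕ):ℝ) := by exact_mod_cast h2
      rw [hcast] at h3
      exact le_trans (Nat.le_ceil _) h3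
    have hei : 6+5*c ≤ (c-1)*((i:ℝ)-1) := by
      rw [div_le_iff₀ hepos] at hi1R
      linarith
    have hL1low : (((i:ℝ)-1)^2-2)*Real.log 2 ≤ -Real.log ε := by
      have h1 : Real.log ε ≤ Real.log (eta (i-1)) := Real.log_le_log hp (le_of_lt him1)
      have h2 := neg_log_eta (i-1)
      rw [hcast] at h2
      linarith
    have hsq1 : (14:ℝ) ≤ ((i:ℝ)-1)^2-2 := by nlinarith [hi4]
    have hL1pos : 0 < -Real.log ε :=
      lt_of_lt_of_le (mul_pos (by linarith) log_two_pos') hL1low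
    have hL2eq : -Real.log (epsl i) = ((i:ℝ)^2+(i:ℝ)+1)*Real.log 2 := neg_log_epsl i
    have hL2pos : 0 < -Real.log (epsl i) := by
      rw [hL2eq]
      exact mul_pos (by positivity) log_two_pos' 
    have hq1 := one_le_quantW hY hYne (mkMu F) hμY (epsl_pos i)
    have hquant := quant_lower hY hYne F hFY hFsep hFcard hFne hμY i (epsl_pos i)
      (le_refl _)
    have hmono : relPackNum Y ε ≤ relPackNum Y (eta i) := relPackNum_anti (eta_pos i) hetai
    have hNq : relPackNum Y ε ≤ 2 * quantW 1 (mkMu F) (epsl i) := by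
      have h1 : (relPackNum Y ε : ℝ) ≤ ((2 * quantW 1 (mkMu F) (epsl i) : ℕ) : ℝ) := by
        push_cast
        calc (relPackNum Y ε : ℝ) ≤ (relPackNum Y (eta i) : ℝ) := by exact_mod_cast hmono
          _ ≤ 2 * quantW 1 (mkMu F) (epsl i) := hquant
      exact_mod_cast h1
    have hprod := mul_le_mul_of_nonneg_right hei (by linarith : (0:ℝ) ≤ (i:ℝ)-1)
    have hpoly : (i:ℝ)^2+(i:ℝ)+1 ≤ c*(((i:ℝ)-1)^2-2) := by
      nlinarith [hprod, hi4, hcpos, hepos]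
    have h21 : -Real.log (epsl i) ≤ c * (-Real.log ε) := by
      rw [hL2eq]
      have h1 := mul_le_mul_of_nonneg_left hL1low (le_of_lt hcpos)
      nlinarith [hpoly, log_two_pos', h1]
    have hlog2 : 2*Real.log 2 ≤ (c-1)*(-Real.log ε) := by
      have hii : (i:ℝ)-1 ≤ ((i:ℝ)-1)^2-2 := by nlinarith [hi4]
      have h1 : (c-1)*((i:ℝ)-1) ≤ (c-1)*(((i:ℝ)-1)^2-2) :=
        mul_le_mul_of_nonneg_left hii (le_of_lt hepos)
      have h2 := mul_le_mul_of_nonneg_left hL1low (le_of_lt hepos)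
      nlinarith [log_two_pos', hei, h1, h2]
    have hKbig : 2*(c*Kc) ≤ (c-1)*(-Real.log (epsl i)) := by
      rw [hL2eq]
      have hbig : 24+20*c ≤ (c-1)*((i:ℝ)^2+(i:ℝ)+1) := by
        nlinarith [hprod, hi4, hcpos, hepos]
      have hlb := Real.log_two_gt_d9
      have hstep : (24+20*c)*(0.6931471803:ℝ) ≤ ((c-1)*((i:ℝ)^2+(i:ℝ)+1))*Real.log 2 :=
        mul_le_mul hbig (le_of_lt hlb) (by norm_num) (by nlinarith [hbig, hcpos])
      nlinarith [hstep, mul_le_mul_of_nonneg_left Kc_le_one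
        (by linarith : (0:ℝ) ≤ 2*c), hcpos]
    exact A2 hq1 hNq hL1pos hL2pos hc hepos h21 hlog2 hKbig
  · -- (IV) f (2ε) ≤ c g ε + (c-1)
    filter_upwards [ev_pos, ev_small (by norm_num : (0:ℝ) < 1/2),
      ev_L_ge (c*Real.log 2/(c-1)), ev_L_ge (c*Kc/(c-1))] with ε hp h1 hB1 hB2
    have h2p : (0:ℝ) < 2*ε := by linarith
    have h2lt : 2*ε < 1 := by linarith
    have hL2 : 0 < -Real.log ε := hLpos hp (by linarith)
    have hLdouble : -Real.log (2*ε) = -Real.log ε - Real.log 2 := by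
      rw [Real.log_mul (by norm_num : (2:ℝ) ≠ 0) hp.ne']
      ring
    have hL1 : 0 < -Real.log (2*ε) := hLpos h2p h2lt
    have hq := quantW_le_relPackNum hY hYne (mkMu F) hμY h2p
    have heq : (2*ε)/2 = ε := by ring
    rw [heq] at hq
    have h21 : -Real.log ε ≤ c * (-Real.log (2*ε)) := by
      rw [hLdouble]
      have h5 := (div_le_iff₀ hepos).mp hB1
      nlinarith
    have hK : c * Kc ≤ (c-1) * (-Real.log ε) := by
      have h5 := (div_le_iff₀ hepos).mp hB2
      nlinarith
    exact A1_s19 hq hL1 hL2 hc hepos h21 hK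
end
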